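/- arXiv:math/0302160 — 3 statements merged into one kernel-verified Lean document; each statement's English description precedes it below -/
import Mathlib

section
/- Let ζ ≥ 0 and let L_ζ w := −w'' + ζ w + (1/2) W''(u⋆) w. If w solves L_ζ w = 0 on an interval (t₁, t₂) with w(t₁) = w(t₂) = 0, then w ≡ 0 on (t₁, t₂). -/
open Set Filter

/-- Injectivity on bounded intervals: if `ζ ≥ 0` and `w` solves
`L_ζ w := −w'' + ζ w + (1/2) W''(u⋆) w = 0` on `(t₁, t₂)` with
`w(t₁) = w(t₂) = 0`, then `w ≡ 0` on `(t₁, t₂)`. -/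
theorem Lzeta_injective_on_interval
    (W : ℝ → ℝ) (hW : ContDiff ℝ (⊤ : ℕ∞) W)
    (hW1 : W 1 = 0) (hWm1 : W (-1) = 0)
    (hWpos : ∀ x ∈ Set.Ioo (-1 : ℝ) 1, 0 < W x)
    (hW''1 : 0 < deriv (deriv W) 1) (hW''m1 : 0 < deriv (deriv W) (-1))
    (u : ℝ → ℝ) (hu : ContDiff ℝ (⊤ : ℕ∞) u)
    (hode : ∀ t, deriv (deriv u) t = (1 / 2) * deriv W (u t))
    (hfirst : ∀ t, (deriv u t) ^ 2 = W (u t))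
    (hu0 : u 0 = 0) (hmono : StrictMono u)
    (hlimtop : Tendsto u atTop (nhds 1)) (hlimbot : Tendsto u atBot (nhds (-1)))
    (ζ : ℝ) (hζ : 0 ≤ ζ) (t₁ t₂ : ℝ) (ht : t₁ < t₂)
    (w : ℝ → ℝ) (hw : ContDiff ℝ 2 w)
    (heq : ∀ t ∈ Set.Ioo t₁ t₂,
      -(deriv (deriv w) t) + ζ * w t + (1 / 2) * deriv (deriv W) (u t) * w t = 0)
    (hb1 : w t₁ = 0) (hb2 : w t₂ = 0) :
    ∀ t ∈ Set.Ioo t₁ t₂, w t = 0 := by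
  -- basic differentiability facts
  have hu_inf : ContDiff ℝ (⊤ : ℕ∞) u := hu.of_le (by simp)
  have hW_inf : ContDiff ℝ (⊤ : ℕ∞) W := hW.of_le (by simp)
  have hu_diff : Differentiable ℝ u := hu_inf.differentiable (by simp)
  have hp_cd : ContDiff ℝ (⊤ : ℕ∞) (deriv u) := (contDiff_infty_iff_deriv.mp hu_inf).2
  have hp_diff : Differentiable ℝ (deriv u) := hp_cd.differentiable (by simp)
  have hW_diff : Differentiable ℝ W := hW_inf.differentiable (by simp)
  have hW'_cd : ContDiff ℝ (⊤ : ℕ∞) (deriv W) := (contDiff_infty_iff_deriv.mp hW_inf).2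
  have hW'_diff : Differentiable ℝ (deriv W) := hW'_cd.differentiable (by simp)
  have hw2 : ContDiff ℝ ((1 : ℕ) + 1) w := by exact_mod_cast hw
  have hw_diff : Differentiable ℝ w := (contDiff_succ_iff_deriv.mp hw2).1
  have hw'_cd : ContDiff ℝ 1 (deriv w) := (contDiff_succ_iff_deriv.mp hw2).2.2
  have hw'_diff : Differentiable ℝ (deriv w) := (contDiff_one_iff_deriv.mp hw'_cd).1
  -- u takes values in (-1, 1)
  have humem : ∀ t, u t ∈ Ioo (-1 : ℝ) 1 := by
    intro t
    have hle : ∀ s, u s ≤ 1 := fun s => hmono.monotone.ge_of_tendsto hlimtop s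
    have hge : ∀ s, -1 ≤ u s := fun s => hmono.monotone.le_of_tendsto hlimbot s
    constructor
    · exact lt_of_le_of_lt (hge (t - 1)) (hmono (by linarith))
    · exact lt_of_lt_of_le (hmono (lt_add_one t)) (hle (t + 1))
  -- deriv u is positive everywhere
  have hp_ne : ∀ t, deriv u t ≠ 0 := by
    intro t h
    have := hfirst t
    rw [h] at this
    have := hWpos _ (humem t)
    simp at *
    linarith
  have hp_cont : Continuous (deriv u) := hp_diff.continuous
  have hc : ∃ c, 0 < deriv u c := by
    obtain ⟨c, _, hc⟩ := exists_hasDerivAt_eq_slope u (deriv u) one_pos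
      (hu_diff.continuous.continuousOn) (fun x _ => (hu_diff x).hasDerivAt)
    refine ⟨c, ?_⟩
    rw [hc]
    have h01 : u 0 < u 1 := hmono one_pos
    rw [hu0] at h01
    norm_num
    linarith
  have hp_pos : ∀ t, 0 < deriv u t := by
    obtain ⟨c, hc⟩ := hc
    intro t
    rcases lt_or_ge 0 (deriv u t) with h | h
    · exact h
    · exfalso
      have hneg : deriv u t < 0 := lt_of_le_of_ne h (hp_ne t)
      rcases le_total t c with hts | hts
      · have : (0 : ℝ) ∈ Icc (deriv u t) (deriv u c) := ⟨le_of_lt hneg, le_of_lt hc⟩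
        obtain ⟨x, _, hx⟩ := intermediate_value_Icc hts hp_cont.continuousOn this
        exact hp_ne x hx
      · have : (0 : ℝ) ∈ Icc (deriv u t) (deriv u c) := ⟨le_of_lt hneg, le_of_lt hc⟩
        obtain ⟨x, _, hx⟩ := intermediate_value_Icc' hts hp_cont.continuousOn this
        exact hp_ne x hx
  set p := deriv u with hp_def
  set q : ℝ → ℝ := fun s => (1 / 2) * deriv (deriv W) (u s) with hq_def
  -- derivative of p as an explicit function
  have hdp_fun : deriv p = fun s => (1 / 2) * deriv W (u s) := funext hode
  have hdp_cont : Continuous (deriv p) := by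
    rw [hdp_fun]
    exact (continuous_const.mul (hW'_diff.continuous.comp hu_diff.continuous))
  -- second derivative of p
  have hp'' : ∀ t, HasDerivAt (deriv p) (q t * p t) t := by
    intro t
    rw [hdp_fun]
    have h1 : HasDerivAt (deriv W) (deriv (deriv W) (u t)) (u t) := (hW'_diff _).hasDerivAt
    have h2 : HasDerivAt u (p t) t := (hu_diff t).hasDerivAt
    have h3 : HasDerivAt (fun s => deriv W (u s)) (deriv (deriv W) (u t) * p t) t :=
      h1.comp t h2
    have := h3.const_mul (1 / 2 : ℝ)
    exact this.congr_deriv (by simp only [hq_def]; ring)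
  -- Wronskian-type function and energy
  set F : ℝ → ℝ := fun s => deriv w s * p s - w s * deriv p s with hF_def
  set E : ℝ → ℝ := fun s => F s * w s / p s with hE_def
  have hF_cont : Continuous F :=
    (hw'_diff.continuous.mul hp_diff.continuous).sub (hw_diff.continuous.mul hdp_cont)
  have hE_cont : Continuous E :=
    (hF_cont.mul hw_diff.continuous).div hp_diff.continuous (fun t => (hp_pos t).ne')
  -- derivative of F on the open interval
  have hF' : ∀ t ∈ Ioo t₁ t₂, HasDerivAt F (ζ * w t * p t) t := by
    intro t htm
    have hww : deriv (deriv w) t = ζ * w t + q t * w t := by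
      have := heq t htm
      simp only [hq_def]
      linarith
    have h1 : HasDerivAt (fun s => deriv w s * p s)
        (deriv (deriv w) t * p t + deriv w t * deriv p t) t :=
      ((hw'_diff t).hasDerivAt).mul ((hp_diff t).hasDerivAt)
    have h2 : HasDerivAt (fun s => w s * deriv p s)
        (deriv w t * deriv p t + w t * (q t * p t)) t :=
      ((hw_diff t).hasDerivAt).mul (hp'' t)
    have := h1.sub h2
    refine this.congr_deriv ?_
    rw [hww]; ring
  -- derivative of E on the open interval
  have hE' : ∀ t ∈ Ioo t₁ t₂,
      HasDerivAt E (ζ * (w t) ^ 2 + (F t) ^ 2 / (p t) ^ 2) t := by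
    intro t htm
    have h1 : HasDerivAt (fun s => F s * w s)
        (ζ * w t * p t * w t + F t * deriv w t) t :=
      (hF' t htm).mul ((hw_diff t).hasDerivAt)
    have h2 := h1.div ((hp_diff t).hasDerivAt) (hp_pos t).ne'
    refine h2.congr_deriv ?_
    have hpne : p t ≠ 0 := (hp_pos t).ne'
    have hFt : F t = deriv w t * p t - w t * deriv p t := rfl
    field_simp
    rw [hFt]; ring
  -- E is monotone on [t₁, t₂] with zero boundary values, hence ≡ 0
  have hE_mono : MonotoneOn E (Icc t₁ t₂) := by
    apply monotoneOn_of_deriv_nonneg (convex_Icc t₁ t₂) hE_cont.continuousOn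
    · intro x hx
      rw [interior_Icc] at hx
      exact ((hE' x hx).differentiableAt).differentiableWithinAt
    · intro x hx
      rw [interior_Icc] at hx
      rw [(hE' x hx).deriv]
      have := sq_nonneg (F x)
      have := sq_nonneg (p x)
      have := sq_nonneg (w x)
      positivity
  have hE1 : E t₁ = 0 := by simp [hE_def, hb1]
  have hE2 : E t₂ = 0 := by simp [hE_def, hb2]
  have hE0 : ∀ x ∈ Icc t₁ t₂, E x = 0 := by
    intro x hx
    have h1 := hE_mono (left_mem_Icc.mpr ht.le) hx hx.1
    have h2 := hE_mono hx (right_mem_Icc.mpr ht.le) hx.2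
    rw [hE1] at h1; rw [hE2] at h2
    linarith
  -- hence F vanishes on the open interval
  have hF0 : ∀ x ∈ Ioo t₁ t₂, F x = 0 := by
    intro x hx
    have hev : E =ᶠ[nhds x] (fun _ => (0 : ℝ)) := by
      filter_upwards [Ioo_mem_nhds hx.1 hx.2] with y hy
      exact hE0 y (Ioo_subset_Icc_self hy)
    have hd0 : deriv E x = 0 := by
      rw [hev.deriv_eq]; simp
    have hd := (hE' x hx).deriv
    rw [hd0] at hd
    have h1 : 0 ≤ ζ * (w x) ^ 2 := by positivity
    have h2 : 0 ≤ (F x) ^ 2 / (p x) ^ 2 := by positivity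
    have h3 : (F x) ^ 2 / (p x) ^ 2 = 0 := by linarith
    have hpne : (p x) ^ 2 ≠ 0 := pow_ne_zero _ (hp_pos x).ne'
    field_simp at h3
    exact (pow_eq_zero_iff two_ne_zero).mp ((div_eq_zero_iff.mp h3).resolve_right hpne)
  -- v := w / p has zero derivative on the open interval
  set v : ℝ → ℝ := fun s => w s / p s with hv_def
  have hv_cont : Continuous v :=
    hw_diff.continuous.div hp_diff.continuous (fun t => (hp_pos t).ne')
  have hv' : ∀ x ∈ Ioo t₁ t₂, HasDerivAt v 0 x := by
    intro x hx
    have h := ((hw_diff x).hasDerivAt).div ((hp_diff x).hasDerivAt) (hp_pos x).ne'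
    have hFx := hF0 x hx
    have : (deriv w x * p x - w x * deriv p x) / (p x) ^ 2 = 0 := by
      have : deriv w x * p x - w x * deriv p x = F x := rfl
      rw [this, hFx, zero_div]
    rwa [this] at h
  -- conclude w = 0 on (t₁, t₂)
  intro t htm
  have key : ∀ x ∈ Icc t t₂, v x = v t := by
    apply constant_of_has_deriv_right_zero (hv_cont.continuousOn)
    intro x hx
    have hxm : x ∈ Ioo t₁ t₂ := ⟨lt_of_lt_of_le htm.1 hx.1, hx.2⟩
    exact (hv' x hxm).hasDerivWithinAt
  have h2 : v t₂ = v t := key t₂ (right_mem_Icc.mpr htm.2.le)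
  have h3 : v t₂ = 0 := by simp [hv_def, hb2]
  have h4 : v t = 0 := by rw [← h2, h3]
  have : w t / p t = 0 := h4
  rcases div_eq_zero_iff.mp this with h | h
  · exact h
  · exact absurd h (hp_pos t).ne'
end

section
/- Let ζ > 0 and γ_±(ζ) := √(ζ + W''(±1)/2). If w solves −w'' + ζ w + (1/2) W''(u⋆) w = 0 on all of ℝ and |w(t)| ≤ C (1+e^t)^{δ₊}(1+e^{−t})^{δ₋} for some δ_± < γ_±(ζ), then w ≡ 0. -/
open Set Filter

section Aux
open Real


lemma barrier_decay (w V : ℝ → ℝ)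
    (hwd : Differentiable ℝ w) (hwd2 : Differentiable ℝ (deriv w))
    (heq : ∀ t, deriv (deriv w) t = V t * w t)
    (g T : ℝ) (hg : 0 < g) (hV : ∀ t, T ≤ t → g ^ 2 ≤ V t)
    (C δ : ℝ) (hδ : δ < g) (hb : ∀ t, T ≤ t → w t ≤ C * Real.exp (δ * t)) :
    ∀ t, T ≤ t → w t ≤ |w T| * Real.exp (-(g * (t - T))) := by
  intro t₁ ht₁
  set A := |w T| with hA
  have hA0 : 0 ≤ A := abs_nonneg _
  have hwc : Continuous w := hwd.continuous
  have key : ∀ ε : ℝ, 0 < ε →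
      w t₁ ≤ A * Real.exp (-(g * (t₁ - T))) + ε * Real.exp (g * (t₁ - T)) := by
    intro ε hε
    by_contra hcon
    push_neg at hcon
    set P : ℝ → ℝ := fun t => A * Real.exp (-(g * (t - T))) + ε * Real.exp (g * (t - T))
      with hPdef
    set P' : ℝ → ℝ := fun t =>
      A * (Real.exp (-(g * (t - T))) * -g) + ε * (Real.exp (g * (t - T)) * g) with hP'def
    have hlin : ∀ t : ℝ, HasDerivAt (fun s : ℝ => g * (s - T)) g t := by
      intro t
      simpa using ((hasDerivAt_id t).sub_const T).const_mul g
    have hPd : ∀ t, HasDerivAt P (P' t) t := by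
      intro t
      exact (((hlin t).neg.exp).const_mul A).add (((hlin t).exp).const_mul ε)
    have hPd2 : ∀ t, HasDerivAt P' (g ^ 2 * P t) t := by
      intro t
      have h1 := ((((hlin t).neg.exp).mul_const (-g)).const_mul A).add
        ((((hlin t).exp).mul_const g).const_mul ε)
      refine h1.congr_deriv ?_
      simp only [hPdef, Pi.neg_apply]
      ring
    have hPpos : ∀ t, 0 < P t := by
      intro t
      have : 0 < ε * Real.exp (g * (t - T)) := by positivity
      have h2 : 0 ≤ A * Real.exp (-(g * (t - T))) := by positivity
      simp only [hPdef]; linarith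
    set z : ℝ → ℝ := fun t => w t - P t with hzdef
    have hzd : ∀ t, HasDerivAt z (deriv w t - P' t) t := fun t =>
      ((hwd t).hasDerivAt).sub (hPd t)
    have hzdiff : Differentiable ℝ z := fun t => (hzd t).differentiableAt
    have hzderiv : deriv z = fun t => deriv w t - P' t := funext fun t => (hzd t).deriv
    have hzd2 : ∀ t, HasDerivAt (deriv z) (deriv (deriv w) t - g ^ 2 * P t) t := by
      rw [hzderiv]
      exact fun t => ((hwd2 t).hasDerivAt).sub (hPd2 t)
    have hzc : Continuous z := hzdiff.continuous
    have hzT : z T ≤ 0 := by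
      have h1 : w T ≤ A := le_abs_self _
      have : P T = A + ε := by simp [hPdef]
      simp only [hzdef, this]
      linarith
    have hz1 : 0 < z t₁ := by
      simp only [hzdef, hPdef]
      linarith [hcon]
    -- find t₂ beyond t₁ with z t₂ < 0
    have hzle : ∀ t, T ≤ t → z t ≤ C * Real.exp (δ * t) - ε * Real.exp (g * (t - T)) := by
      intro t ht
      have h1 := hb t ht
      have h2 : 0 ≤ A * Real.exp (-(g * (t - T))) := by positivity
      simp only [hzdef, hPdef]
      linarith
    have hDtend : Tendsto (fun t => C * Real.exp (δ * t) - ε * Real.exp (g * (t - T)))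
        atTop atBot := by
      have hrw : ∀ t : ℝ, C * Real.exp (δ * t) - ε * Real.exp (g * (t - T)) =
          Real.exp (g * (t - T)) * (C * Real.exp ((δ - g) * t + g * T) - ε) := by
        intro t
        have e1 : Real.exp (g * (t - T)) * Real.exp ((δ - g) * t + g * T)
            = Real.exp (δ * t) := by
          rw [← Real.exp_add]; ring_nf
        calc C * Real.exp (δ * t) - ε * Real.exp (g * (t - T))
            = C * (Real.exp (g * (t - T)) * Real.exp ((δ - g) * t + g * T))
              - ε * Real.exp (g * (t - T)) := by rw [e1]
          _ = Real.exp (g * (t - T)) * (C * Real.exp ((δ - g) * t + g * T) - ε) := by ring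
      rw [funext hrw]
      have hexp2 : Tendsto (fun t => Real.exp (g * (t - T))) atTop atTop := by
        apply Real.tendsto_exp_atTop.comp
        have h0 : Tendsto (fun t : ℝ => t - T) atTop atTop :=
          tendsto_atTop_add_const_right atTop (-T) tendsto_id
        exact h0.const_mul_atTop hg
      have hfac : Tendsto (fun t => C * Real.exp ((δ - g) * t + g * T) - ε) atTop
          (nhds (-ε)) := by
        have hl : Tendsto (fun t : ℝ => (δ - g) * t + g * T) atTop atBot := by
          apply tendsto_atBot_add_const_right
          exact tendsto_id.const_mul_atTop_of_neg (by linarith)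
        have := (Real.tendsto_exp_atBot.comp hl).const_mul C
        have h2 := this.sub_const ε
        simpa using h2
      exact hexp2.atTop_mul_neg (by linarith) hfac
    obtain ⟨t₂, ht₂⟩ := ((hDtend.eventually (eventually_lt_atBot (0:ℝ))).and
      (eventually_gt_atTop t₁)).exists
    have ht₂T : T ≤ t₂ := le_trans ht₁ ht₂.2.le
    have hzt₂ : z t₂ < 0 := lt_of_le_of_lt (hzle t₂ ht₂T) ht₂.1
    -- sSup / sInf
    set S₁ : Set ℝ := Icc T t₁ ∩ {s | z s ≤ 0} with hS₁
    have hS₁closed : IsClosed S₁ := isClosed_Icc.inter (isClosed_le hzc continuous_const)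
    have hS₁ne : S₁.Nonempty := ⟨T, ⟨left_mem_Icc.mpr ht₁, hzT⟩⟩
    have hS₁bdd : BddAbove S₁ := BddAbove.mono Set.inter_subset_left bddAbove_Icc
    set a := sSup S₁ with ha
    have haS : a ∈ S₁ := hS₁closed.csSup_mem hS₁ne hS₁bdd
    have haT : T ≤ a := haS.1.1
    have hza : z a ≤ 0 := haS.2
    have ha1 : a < t₁ := lt_of_le_of_ne haS.1.2 (by
      intro h; rw [h] at hza; linarith)
    have hgta : ∀ s, a < s → s ≤ t₁ → 0 < z s := by
      intro s h1 h2
      by_contra h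
      push_neg at h
      have hs : s ∈ S₁ := ⟨⟨le_trans haT h1.le, h2⟩, h⟩
      exact absurd (le_csSup hS₁bdd hs) (not_le.mpr h1)
    set S₂ : Set ℝ := Icc t₁ t₂ ∩ {s | z s ≤ 0} with hS₂
    have hS₂closed : IsClosed S₂ := isClosed_Icc.inter (isClosed_le hzc continuous_const)
    have hS₂ne : S₂.Nonempty := ⟨t₂, ⟨right_mem_Icc.mpr ht₂.2.le, hzt₂.le⟩⟩
    have hS₂bdd : BddBelow S₂ := BddBelow.mono Set.inter_subset_left bddBelow_Icc
    set c := sInf S₂ with hc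
    have hcS : c ∈ S₂ := hS₂closed.csInf_mem hS₂ne hS₂bdd
    have hzc0 : z c ≤ 0 := hcS.2
    have h1c : t₁ < c := lt_of_le_of_ne hcS.1.1 (by
      intro h; rw [← h] at hzc0; linarith)
    have hltc : ∀ s, t₁ ≤ s → s < c → 0 < z s := by
      intro s h1 h2
      by_contra h
      push_neg at h
      have hs : s ∈ S₂ := ⟨⟨h1, le_trans h2.le hcS.1.2⟩, h⟩
      exact absurd (csInf_le hS₂bdd hs) (not_le.mpr h2)
    have hac : a < c := ha1.trans h1c
    have hzpos : ∀ s ∈ Ioo a c, 0 < z s := by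
      intro s hs
      rcases le_or_gt s t₁ with h | h
      · exact hgta s hs.1 h
      · exact hltc s h.le hs.2
    -- convexity
    have hconv : ConvexOn ℝ (Icc a c) z := by
      apply convexOn_of_deriv2_nonneg (convex_Icc a c) hzc.continuousOn
        hzdiff.differentiableOn
        (fun t _ => ((hzd2 t).differentiableAt).differentiableWithinAt)
      intro x hx
      rw [interior_Icc] at hx
      have h2 : deriv^[2] z x = deriv (deriv z) x := rfl
      rw [h2, (hzd2 x).deriv, heq x]
      have hwx : 0 < w x := by
        have := hzpos x hx
        have := hPpos x
        simp only [hzdef] at *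
        linarith
      have hVx : g ^ 2 ≤ V x := hV x (le_trans haT hx.1.le)
      have hPx : w x - P x = z x := rfl
      nlinarith [hzpos x hx, (mul_le_mul_of_nonneg_right hVx hwx.le)]
    have hseg : t₁ ∈ segment ℝ a c := by
      rw [segment_eq_Icc hac.le]
      exact ⟨ha1.le, h1c.le⟩
    have := hconv.le_on_segment (left_mem_Icc.mpr hac.le) (right_mem_Icc.mpr hac.le) hseg
    have : z t₁ ≤ 0 := le_trans this (max_le hza hzc0)
    linarith
  -- now take ε → 0
  apply le_of_forall_pos_le_add
  intro ε' hε'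
  have h := key (ε' * Real.exp (-(g * (t₁ - T)))) (by positivity)
  calc w t₁ ≤ A * Real.exp (-(g * (t₁ - T)))
      + ε' * Real.exp (-(g * (t₁ - T))) * Real.exp (g * (t₁ - T)) := h
    _ = A * Real.exp (-(g * (t₁ - T))) + ε' := by
      rw [mul_assoc, ← Real.exp_add]
      simp

lemma G_tendsto_atTop (w V h : ℝ → ℝ)
    (hwd : Differentiable ℝ w) (hwd2 : Differentiable ℝ (deriv w))
    (heq : ∀ t, deriv (deriv w) t = V t * w t)
    (K : ℝ) (hK : ∀ t, |V t| ≤ K)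
    (g T : ℝ) (hg : 0 < g) (hV : ∀ t, T ≤ t → g ^ 2 ≤ V t)
    (C δ : ℝ) (hδ : δ < g) (hb : ∀ t, T ≤ t → |w t| ≤ C * Real.exp (δ * t))
    (B T' : ℝ) (hB : ∀ t, T' ≤ t → |deriv h t / h t| ≤ B) :
    Tendsto (fun t => w t * deriv w t - (deriv h t / h t) * (w t) ^ 2) atTop (nhds 0) := by
  have hK0 : 0 ≤ K := le_trans (abs_nonneg _) (hK 0)
  have hB0 : 0 ≤ B := le_trans (abs_nonneg _) (hB (max T' 0) (le_max_left _ _))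
  set A := |w T| with hA
  have hA0 : 0 ≤ A := abs_nonneg _
  -- decay of |w|
  have hup := barrier_decay w V hwd hwd2 heq g T hg hV C δ hδ
    (fun t ht => le_trans (le_abs_self _) (hb t ht))
  have hdownaux : ∀ t, T ≤ t → -w t ≤ |w T| * Real.exp (-(g * (t - T))) := by
    have hniq : deriv (fun s => -w s) = fun s => -deriv w s := funext fun s => deriv.neg
    have h1 : Differentiable ℝ (fun s => -w s) := hwd.neg
    have h2 : Differentiable ℝ (deriv fun s => -w s) := by rw [hniq]; exact hwd2.neg
    have h3 : ∀ t, deriv (deriv fun s => -w s) t = V t * (-w t) := by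
      intro t
      rw [hniq]
      rw [show (deriv fun s => -deriv w s) t = -deriv (deriv w) t from deriv.neg]
      rw [heq t]; ring
    have := barrier_decay (fun s => -w s) V h1 h2 h3 g T hg hV C δ hδ
      (fun t ht => le_trans (neg_le_abs _) (by simpa using hb t ht))
    simpa using this
  have hdec : ∀ t, T ≤ t → |w t| ≤ A * Real.exp (-(g * (t - T))) := by
    intro t ht
    rw [abs_le]
    exact ⟨by linarith [hdownaux t ht], hup t ht⟩
  -- exp decay tendsto
  have hexp0 : Tendsto (fun t => Real.exp (-(g * (t - T)))) atTop (nhds 0) := by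
    apply Real.tendsto_exp_atBot.comp
    have h0 : Tendsto (fun t : ℝ => t - T) atTop atTop :=
      tendsto_atTop_add_const_right atTop (-T) tendsto_id
    have h1 := h0.const_mul_atTop hg
    exact tendsto_neg_atBot_iff.mpr h1
  have hw0 : Tendsto w atTop (nhds 0) := by
    apply squeeze_zero_norm' (a := fun t => A * Real.exp (-(g * (t - T))))
    · filter_upwards [eventually_ge_atTop T] with t ht
      exact hdec t ht
    · simpa using hexp0.const_mul A
  -- derivative bound
  have hw'dec : ∀ t, T ≤ t → |deriv w t| ≤ (2 * A + K * A) * Real.exp (-(g * (t - T))) := by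
    intro t ht
    have hlt : t < t + 1 := by linarith
    obtain ⟨ξ, hξ, hslope⟩ := exists_hasDerivAt_eq_slope w (deriv w) hlt
      (hwd.continuous.continuousOn) (fun x _ => (hwd x).hasDerivAt)
    set M := K * A * Real.exp (-(g * (t - T))) with hM
    have hM0 : 0 ≤ M := by positivity
    have hbd : ∀ x ∈ Ico t (t + 1), ‖derivWithin (deriv w) (Icc t (t + 1)) x‖ ≤ M := by
      intro x hx
      have hxI : x ∈ Icc t (t + 1) := ⟨hx.1, hx.2.le⟩
      rw [(hwd2 x).derivWithin ((uniqueDiffOn_Icc hlt) x hxI)]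
      rw [Real.norm_eq_abs, heq x, abs_mul]
      have h1 : |w x| ≤ A * Real.exp (-(g * (x - T))) := hdec x (le_trans ht hx.1)
      have h2 : Real.exp (-(g * (x - T))) ≤ Real.exp (-(g * (t - T))) := by
        apply Real.exp_le_exp.mpr
        nlinarith [hx.1]
      calc |V x| * |w x| ≤ K * (A * Real.exp (-(g * (x - T)))) := by
            apply mul_le_mul (hK x) h1 (abs_nonneg _) hK0
        _ ≤ M := by rw [hM]; nlinarith [mul_le_mul_of_nonneg_left h2 (mul_nonneg hK0 hA0)]
    have hdiff : DifferentiableOn ℝ (deriv w) (Icc t (t + 1)) := hwd2.differentiableOn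
    have hcmp := norm_image_sub_le_of_norm_deriv_le_segment hdiff hbd ξ
      ⟨hξ.1.le, hξ.2.le⟩
    -- |deriv w ξ - deriv w t| ≤ M * (ξ - t) ≤ M
    have hwin : |deriv w ξ - deriv w t| ≤ M := by
      rw [Real.norm_eq_abs] at hcmp
      have : M * (ξ - t) ≤ M * 1 := by nlinarith [hξ.2, hξ.1]
      linarith
    have hslopeval : |deriv w ξ| ≤ 2 * A * Real.exp (-(g * (t - T))) := by
      rw [hslope]
      have h1 : |w (t + 1)| ≤ A * Real.exp (-(g * (t + 1 - T))) := hdec _ (by linarith)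
      have h2 : |w t| ≤ A * Real.exp (-(g * (t - T))) := hdec t ht
      have h3 : Real.exp (-(g * (t + 1 - T))) ≤ Real.exp (-(g * (t - T))) := by
        apply Real.exp_le_exp.mpr; nlinarith
      have h4 : |(w (t + 1) - w t) / (t + 1 - t)| ≤ |w (t+1)| + |w t| := by
        rw [show t + 1 - t = (1:ℝ) by ring, div_one]
        exact abs_sub _ _
      nlinarith [abs_nonneg (w (t+1))]
    calc |deriv w t| = |deriv w ξ - (deriv w ξ - deriv w t)| := by ring_nf
      _ ≤ |deriv w ξ| + |deriv w ξ - deriv w t| := by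
          exact (abs_sub _ _)
      _ ≤ 2 * A * Real.exp (-(g * (t - T))) + M := add_le_add hslopeval hwin
      _ = (2 * A + K * A) * Real.exp (-(g * (t - T))) := by rw [hM]; ring
  have hw'0 : Tendsto (deriv w) atTop (nhds 0) := by
    apply squeeze_zero_norm' (a := fun t => (2 * A + K * A) * Real.exp (-(g * (t - T))))
    · filter_upwards [eventually_ge_atTop T] with t ht
      exact hw'dec t ht
    · simpa using hexp0.const_mul (2 * A + K * A)
  -- conclude
  have hterm1 : Tendsto (fun t => w t * deriv w t) atTop (nhds 0) := by
    simpa using hw0.mul hw'0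
  have hterm2 : Tendsto (fun t => (deriv h t / h t) * (w t) ^ 2) atTop (nhds 0) := by
    apply squeeze_zero_norm' (a := fun t => B * (A * Real.exp (-(g * (t - T)))) ^ 2)
    · filter_upwards [eventually_ge_atTop T, eventually_ge_atTop T'] with t ht ht'
      rw [Real.norm_eq_abs, abs_mul, abs_pow]
      have h1 := hdec t ht
      have h2 := hB t ht'
      have h3 : |w t| ^ 2 ≤ (A * Real.exp (-(g * (t - T)))) ^ 2 := by
        apply pow_le_pow_left₀ (abs_nonneg _) h1
      apply mul_le_mul h2 h3 (by positivity) hB0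
    · have : Tendsto (fun t => (A * Real.exp (-(g * (t - T)))) ^ 2) atTop (nhds 0) := by
        have := (hexp0.const_mul A).pow 2
        simpa using this
      simpa using this.const_mul B
  have := hterm1.sub hterm2
  simpa using this


lemma deriv_limit_aux (v : ℝ → ℝ) (hv : Differentiable ℝ v)
    (h0 : Tendsto v atTop (nhds 0)) (L : ℝ) (hL : Tendsto (deriv v) atTop (nhds L))
    (hLpos : 0 < L) : False := by
  have hev : ∀ᶠ t in atTop, L / 2 < deriv v t :=
    hL.eventually (eventually_gt_nhds (by linarith))
  obtain ⟨T, hT⟩ := eventually_atTop.mp hev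
  have hmono : MonotoneOn (fun t => v t - L / 2 * t) (Ici T) := by
    apply monotoneOn_of_deriv_nonneg (convex_Ici T)
    · exact (hv.continuous.sub (continuous_const.mul continuous_id)).continuousOn
    · exact (hv.sub ((differentiable_const _).mul differentiable_id)).differentiableOn
    · intro x hx
      rw [interior_Ici] at hx
      have hd : HasDerivAt (fun t => v t - L / 2 * t) (deriv v x - L / 2) x := by
        exact (((hv x).hasDerivAt).sub ((hasDerivAt_id x).const_mul (L / 2))).congr_deriv (by ring)
      rw [hd.deriv]
      linarith [hT x hx.le]
  have hlin : Tendsto (fun t => v T + L / 2 * (t - T)) atTop atTop := by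
    apply tendsto_atTop_add_const_left
    exact (tendsto_atTop_add_const_right atTop (-T) tendsto_id).const_mul_atTop (by linarith)
  have hev2 : ∀ᶠ t in atTop, v t < 1 := h0.eventually (eventually_lt_nhds one_pos)
  obtain ⟨t, h1, h2, h3⟩ :=
    ((hev2.and ((hlin.eventually_ge_atTop 1).and (eventually_ge_atTop T))).exists)
  have := hmono (self_mem_Ici) (mem_Ici.mpr h3) h3
  simp only at this
  linarith

lemma deriv_limit_zero (v : ℝ → ℝ) (hv : Differentiable ℝ v)
    (h0 : Tendsto v atTop (nhds 0)) (L : ℝ) (hL : Tendsto (deriv v) atTop (nhds L)) :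
    L = 0 := by
  rcases lt_trichotomy L 0 with h | h | h
  · exfalso
    apply deriv_limit_aux (fun t => -v t) hv.neg (by simpa using h0.neg) (-L) _ (by linarith)
    have : deriv (fun t => -v t) = fun t => -deriv v t := funext fun t => deriv.neg
    rw [this]
    exact hL.neg
  · exact h
  · exact absurd h (by simpa using deriv_limit_aux v hv h0 L hL)


lemma near_one_bound (f : ℝ → ℝ) (hf1 : Differentiable ℝ f) (hf2 : Differentiable ℝ (deriv f))
    (h0 : f 1 = 0) (h1 : deriv f 1 = 0) {c : ℝ} (hc : deriv (deriv f) 1 = c) (hcpos : 0 < c) :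
    ∃ η > 0, ∀ x, 1 - η ≤ x → x < 1 →
      |deriv f x| ≤ (4 * Real.sqrt c) * Real.sqrt (f x) := by
  have hd : HasDerivAt (deriv f) c 1 := by
    rw [← hc]; exact (hf2 1).hasDerivAt
  have hslope : Tendsto (slope (deriv f) 1) (nhdsWithin 1 {1}ᶜ) (nhds c) :=
    hasDerivAt_iff_tendsto_slope.mp hd
  have hev : ∀ᶠ x in nhdsWithin 1 {1}ᶜ, slope (deriv f) 1 x ∈ Ioo (c / 2) (2 * c) :=
    hslope.eventually (Ioo_mem_nhds (by linarith) (by linarith))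
  rw [eventually_nhdsWithin_iff, Metric.eventually_nhds_iff] at hev
  obtain ⟨ε, hε, hevp⟩ := hev
  refine ⟨min (ε / 2) (1 / 2), by positivity, ?_⟩
  have hkey : ∀ x, 1 - min (ε / 2) (1 / 2) ≤ x → x < 1 →
      c / 2 * (1 - x) ≤ -deriv f x ∧ -deriv f x ≤ 2 * c * (1 - x) := by
    intro x hx1 hx2
    have hdist : dist x 1 < ε := by
      rw [Real.dist_eq, abs_lt]
      constructor
      · have := min_le_left (ε / 2) (1 / 2); linarith
      · linarith
    have hne : x ∈ ({1}ᶜ : Set ℝ) := by simp; linarith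
    have hP := hevp hdist hne
    have hsl : slope (deriv f) 1 x = deriv f x / (x - 1) := by
      rw [slope_def_field, h1]
      simp [div_eq_div_iff]
    rw [hsl] at hP
    obtain ⟨hP1, hP2⟩ := hP
    have hx1neg : x - 1 < 0 := by linarith
    rw [lt_div_iff_of_neg hx1neg] at hP1
    rw [div_lt_iff_of_neg hx1neg] at hP2
    constructor <;> nlinarith
  intro x hx1 hx2
  obtain ⟨hlow, hup⟩ := hkey x hx1 hx2
  -- lower bound on f x via FTC
  have hcont : Continuous (deriv f) := hf2.continuous
  have hftc : ∫ s in x..1, deriv f s = f 1 - f x :=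
    intervalIntegral.integral_deriv_eq_sub (fun s _ => hf1 s)
      (hcont.intervalIntegrable x 1)
  have hF : ∀ s ∈ uIcc x 1, HasDerivAt (fun s => -(c / 4) * (1 - s) ^ 2) (c / 2 * (1 - s)) s := by
    intro s _
    have : HasDerivAt (fun s : ℝ => (1 - s)) (-1) s := by
      simpa using (hasDerivAt_id s).const_sub 1
    have h2 := (this.pow 2).const_mul (-(c / 4))
    refine h2.congr_deriv ?_
    ring_nf
  have hftc2 : ∫ s in x..1, c / 2 * (1 - s) = (c / 4) * (1 - x) ^ 2 := by
    rw [intervalIntegral.integral_eq_sub_of_hasDerivAt hF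
      ((Continuous.intervalIntegrable (by continuity) x 1))]
    ring_nf
  have hmono : ∫ s in x..1, c / 2 * (1 - s) ≤ ∫ s in x..1, -deriv f s := by
    apply intervalIntegral.integral_mono_on hx2.le
      (Continuous.intervalIntegrable (by continuity) x 1)
      ((hcont.neg).intervalIntegrable x 1)
    intro s hs
    rcases eq_or_lt_of_le hs.2 with h | h
    · rw [h]; simp [h1]
    · exact (hkey s (by linarith [hs.1]) h).1
  have hint : ∫ s in x..1, -deriv f s = f x := by
    rw [intervalIntegral.integral_neg, hftc, h0]
    ring
  have hfx : (c / 4) * (1 - x) ^ 2 ≤ f x := by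
    rw [← hftc2, ← hint]; exact hmono
  -- conclude
  have hsq : Real.sqrt c / 2 * (1 - x) ≤ Real.sqrt (f x) := by
    have h1x : (0:ℝ) ≤ 1 - x := by linarith
    have heq : (c / 4) * (1 - x) ^ 2 = (Real.sqrt c / 2 * (1 - x)) ^ 2 := by
      rw [mul_pow, div_pow, Real.sq_sqrt hcpos.le]
      ring
    calc Real.sqrt c / 2 * (1 - x) = Real.sqrt ((Real.sqrt c / 2 * (1 - x)) ^ 2) := by
          rw [Real.sqrt_sq (by positivity)]
      _ ≤ Real.sqrt (f x) := by
          apply Real.sqrt_le_sqrt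
          rw [← heq]; exact hfx
  have habs : |deriv f x| ≤ 2 * c * (1 - x) := by
    rw [abs_le]
    constructor <;> nlinarith [hcpos]
  calc |deriv f x| ≤ 2 * c * (1 - x) := habs
    _ = 4 * Real.sqrt c * (Real.sqrt c / 2 * (1 - x)) := by
        rw [show (2:ℝ) * c * (1 - x) = 2 * (Real.sqrt c * Real.sqrt c) * (1-x) from by
          rw [Real.mul_self_sqrt hcpos.le]]
        ring
    _ ≤ 4 * Real.sqrt c * Real.sqrt (f x) := by
        apply mul_le_mul_of_nonneg_left hsq (by positivity)



lemma weight_bound (C a b : ℝ) (f : ℝ → ℝ)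
    (hf : ∀ t, |f t| ≤ C * (1 + Real.exp t) ^ a * (1 + Real.exp (-t)) ^ b) :
    ∀ t, 0 ≤ t → |f t| ≤
      (|C| * (max 1 (2 ^ a)) * (max 1 (2 ^ b))) * Real.exp (max a 0 * t) := by
  intro t ht
  have hexp0 : (0:ℝ) < Real.exp t := Real.exp_pos t
  have he1 : (1:ℝ) ≤ Real.exp t := Real.one_le_exp ht
  have hx1 : (1:ℝ) ≤ 1 + Real.exp t := by linarith
  have hy0 : Real.exp (-t) ≤ 1 := by
    rw [← Real.exp_zero]
    exact Real.exp_le_exp.mpr (by linarith)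
  have hy1 : (1:ℝ) ≤ 1 + Real.exp (-t) := by linarith [Real.exp_pos (-t)]
  have hy2 : (1:ℝ) + Real.exp (-t) ≤ 2 := by linarith
  have hexpmax : (1:ℝ) ≤ Real.exp (max a 0 * t) := by
    apply Real.one_le_exp
    have : (0:ℝ) ≤ max a 0 := le_max_right _ _
    positivity
  have hfac1 : (1 + Real.exp t) ^ a ≤ max 1 (2 ^ a) * Real.exp (max a 0 * t) := by
    rcases le_or_gt 0 a with hA | hA
    · have h1 : (1 + Real.exp t) ≤ 2 * Real.exp t := by linarith
      have h2 : (1 + Real.exp t) ^ a ≤ (2 * Real.exp t) ^ a :=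
        Real.rpow_le_rpow (by linarith) h1 hA
      rw [Real.mul_rpow (by norm_num) hexp0.le] at h2
      have h3 : (Real.exp t) ^ a = Real.exp (max a 0 * t) := by
        rw [← Real.exp_mul, max_eq_left hA, mul_comm]
      rw [h3] at h2
      calc (1 + Real.exp t) ^ a ≤ 2 ^ a * Real.exp (max a 0 * t) := h2
        _ ≤ max 1 (2 ^ a) * Real.exp (max a 0 * t) := by
            apply mul_le_mul_of_nonneg_right (le_max_right _ _) (by positivity)
    · have h1 : (1 + Real.exp t) ^ a ≤ 1 := Real.rpow_le_one_of_one_le_of_nonpos hx1 hA.le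
      calc (1 + Real.exp t) ^ a ≤ 1 := h1
        _ ≤ max 1 (2 ^ a) * Real.exp (max a 0 * t) := by
            have h2 : (1:ℝ) ≤ max 1 (2 ^ a) := le_max_left _ _
            nlinarith
  have hfac2 : (1 + Real.exp (-t)) ^ b ≤ max 1 (2 ^ b) := by
    rcases le_or_gt 0 b with hB | hB
    · calc (1 + Real.exp (-t)) ^ b ≤ 2 ^ b := Real.rpow_le_rpow (by linarith) hy2 hB
        _ ≤ max 1 (2 ^ b) := le_max_right _ _
    · calc (1 + Real.exp (-t)) ^ b ≤ 1 := Real.rpow_le_one_of_one_le_of_nonpos hy1 hB.le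
        _ ≤ max 1 (2 ^ b) := le_max_left _ _
  have hxpos : (0:ℝ) < (1 + Real.exp t) ^ a := Real.rpow_pos_of_pos (by linarith) a
  have hypos : (0:ℝ) < (1 + Real.exp (-t)) ^ b :=
    Real.rpow_pos_of_pos (by linarith [Real.exp_pos (-t)]) b
  have hCabs : C ≤ |C| := le_abs_self C
  calc |f t| ≤ C * (1 + Real.exp t) ^ a * (1 + Real.exp (-t)) ^ b := hf t
    _ ≤ |C| * (1 + Real.exp t) ^ a * (1 + Real.exp (-t)) ^ b := by
        apply mul_le_mul_of_nonneg_right _ hypos.le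
        exact mul_le_mul_of_nonneg_right hCabs hxpos.le
    _ ≤ |C| * (max 1 (2 ^ a) * Real.exp (max a 0 * t)) * (1 + Real.exp (-t)) ^ b := by
        apply mul_le_mul_of_nonneg_right _ hypos.le
        exact mul_le_mul_of_nonneg_left hfac1 (abs_nonneg C)
    _ ≤ |C| * (max 1 (2 ^ a) * Real.exp (max a 0 * t)) * max 1 (2 ^ b) := by
        apply mul_le_mul_of_nonneg_left hfac2
        positivity
    _ = (|C| * (max 1 (2 ^ a)) * (max 1 (2 ^ b))) * Real.exp (max a 0 * t) := by ring

end Aux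

set_option maxHeartbeats 2000000 in
/-- Injectivity on the real line: if `ζ > 0`, `w` solves
`−w'' + ζ w + (1/2) W''(u⋆) w = 0` on `ℝ` and is bounded by a constant times the
weight `(1+e^t)^{δ₊} (1+e^{−t})^{δ₋}` with `δ_± < γ_±(ζ) = √(ζ + W''(±1)/2)`,
then `w ≡ 0`. -/
theorem Lzeta_injective_on_line
    (W : ℝ → ℝ) (hW : ContDiff ℝ (⊤ : ℕ∞) W)
    (hW1 : W 1 = 0) (hWm1 : W (-1) = 0)
    (hWpos : ∀ x ∈ Set.Ioo (-1 : ℝ) 1, 0 < W x)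
    (hW''1 : 0 < deriv (deriv W) 1) (hW''m1 : 0 < deriv (deriv W) (-1))
    (u : ℝ → ℝ) (hu : ContDiff ℝ (⊤ : ℕ∞) u)
    (hode : ∀ t, deriv (deriv u) t = (1 / 2) * deriv W (u t))
    (hfirst : ∀ t, (deriv u t) ^ 2 = W (u t))
    (hu0 : u 0 = 0) (hmono : StrictMono u)
    (hlimtop : Tendsto u atTop (nhds 1)) (hlimbot : Tendsto u atBot (nhds (-1)))
    (ζ : ℝ) (hζ : 0 < ζ)
    (δp δm : ℝ)
    (hδp : δp < Real.sqrt (ζ + deriv (deriv W) 1 / 2))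
    (hδm : δm < Real.sqrt (ζ + deriv (deriv W) (-1) / 2))
    (w : ℝ → ℝ) (hw : ContDiff ℝ 2 w)
    (heq : ∀ t : ℝ,
      -(deriv (deriv w) t) + ζ * w t + (1 / 2) * deriv (deriv W) (u t) * w t = 0)
    (C : ℝ)
    (hbound : ∀ t : ℝ, |w t| ≤ C * (1 + Real.exp t) ^ δp * (1 + Real.exp (-t)) ^ δm) :
    ∀ t : ℝ, w t = 0 := by
  -- regularity unpacking
  have hwreg : Differentiable ℝ w ∧ Differentiable ℝ (deriv w) := by
    have h2 : ContDiff ℝ ((1 : ℕ) + 1) w := by exact_mod_cast hw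
    rw [contDiff_succ_iff_deriv] at h2
    exact ⟨h2.1, h2.2.2.differentiable (by simp)⟩
  obtain ⟨hwD, hwD2⟩ := hwreg
  have hWreg : Differentiable ℝ W ∧ Differentiable ℝ (deriv W) ∧
      Differentiable ℝ (deriv (deriv W)) := by
    have h1 : ContDiff ℝ ((⊤:ℕ∞) : WithTop ℕ∞) W := hW.of_le (by simp)
    rw [contDiff_infty_iff_deriv] at h1
    have h2 := h1.2
    rw [contDiff_infty_iff_deriv] at h2
    have h3 := h2.2
    rw [contDiff_infty_iff_deriv] at h3
    exact ⟨h1.1, h2.1, h3.1⟩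
  obtain ⟨hWD, hWD2, hWD3⟩ := hWreg
  have hW''cont : Continuous (deriv (deriv W)) := hWD3.continuous
  have hureg : Differentiable ℝ u ∧ Differentiable ℝ (deriv u) := by
    have h1 : ContDiff ℝ ((⊤:ℕ∞) : WithTop ℕ∞) u := hu.of_le (by simp)
    rw [contDiff_infty_iff_deriv] at h1
    have h2 := h1.2
    rw [contDiff_infty_iff_deriv] at h2
    exact ⟨h1.1, h2.1⟩
  obtain ⟨huD, huD2⟩ := hureg
  -- range of u
  have hult : ∀ s, u s < 1 := by
    intro s
    have hle : ∀ r, u r ≤ 1 := by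
      intro r
      exact ge_of_tendsto hlimtop ((eventually_ge_atTop r).mono fun x hx => hmono.monotone hx)
    exact lt_of_lt_of_le (hmono (by linarith : s < s + 1)) (hle (s + 1))
  have hugt : ∀ s, -1 < u s := by
    intro s
    have hle : ∀ r, -1 ≤ u r := by
      intro r
      exact le_of_tendsto hlimbot ((eventually_le_atBot r).mono fun x hx => hmono.monotone hx)
    exact lt_of_le_of_lt (hle (s - 1)) (hmono (by linarith : s - 1 < s))
  have hrange : ∀ t, u t ∈ Set.Ioo (-1 : ℝ) 1 := fun t => ⟨hugt t, hult t⟩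
  -- h := deriv u is positive
  set h : ℝ → ℝ := deriv u with hhdef
  have hne : ∀ t, h t ≠ 0 := by
    intro t ht0
    have := hfirst t
    rw [ht0] at this
    have := hWpos (u t) (hrange t)
    simp at *
    linarith [this]
  have hpos : ∀ t, 0 < h t := by
    have hcont : Continuous h := huD2.continuous
    obtain ⟨ξ, hξI, hξ⟩ := exists_hasDerivAt_eq_slope u (deriv u) zero_lt_one
      huD.continuous.continuousOn (fun x _ => (huD x).hasDerivAt)
    have hξpos : 0 < h ξ := by
      show (0:ℝ) < deriv u ξ
      rw [hξ]
      have := hmono zero_lt_one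
      simp only [sub_zero, div_one]
      linarith
    intro t
    rcases lt_or_ge 0 (h t) with hgt | hlt
    · exact hgt
    have hlt' : h t < 0 := lt_of_le_of_ne hlt (hne t)
    exfalso
    rcases le_total t ξ with hc | hc
    · have := intermediate_value_Icc hc hcont.continuousOn
      have h0 : (0:ℝ) ∈ Icc (h t) (h ξ) := ⟨hlt'.le, hξpos.le⟩
      obtain ⟨s, _, hs⟩ := this h0
      exact hne s hs
    · have := intermediate_value_Icc' hc hcont.continuousOn
      have h0 : (0:ℝ) ∈ Icc (h t) (h ξ) := ⟨hlt'.le, hξpos.le⟩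
      obtain ⟨s, _, hs⟩ := this h0
      exact hne s hs
  have hsqrt : ∀ t, h t = Real.sqrt (W (u t)) := by
    intro t
    rw [← hfirst t, Real.sqrt_sq (hpos t).le]
  -- derivatives of h
  have hdh : ∀ t, HasDerivAt h (deriv h t) t := fun t => (huD2 t).hasDerivAt
  have hderivh : deriv h = fun t => (1 / 2) * deriv W (u t) := funext fun t => hode t
  have hdh2 : ∀ t, HasDerivAt (deriv h)
      ((1 / 2) * (deriv (deriv W) (u t) * h t)) t := by
    intro t
    rw [hderivh]
    have hcomp : HasDerivAt (fun s => deriv W (u s)) (deriv (deriv W) (u t) * deriv u t) t :=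
      ((hWD2 (u t)).hasDerivAt).comp t ((huD t).hasDerivAt)
    exact hcomp.const_mul (1 / 2)
  -- the potential V
  set V : ℝ → ℝ := fun t => ζ + (1 / 2) * deriv (deriv W) (u t) with hVdef
  have heqV : ∀ t, deriv (deriv w) t = V t * w t := by
    intro t
    show deriv (deriv w) t = (ζ + (1 / 2) * deriv (deriv W) (u t)) * w t
    linear_combination -heq t
  obtain ⟨K₀, hK₀⟩ := (isCompact_Icc (a := (-1:ℝ)) (b := 1)).exists_bound_of_continuousOn
    hW''cont.continuousOn
  have hKV : ∀ t, |V t| ≤ ζ + (1/2) * K₀ := by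
    intro t
    have h1 : |deriv (deriv W) (u t)| ≤ K₀ := by
      have := hK₀ (u t) ⟨(hugt t).le, (hult t).le⟩
      simpa using this
    calc |V t| ≤ |ζ| + |(1/2) * deriv (deriv W) (u t)| := abs_add_le _ _
      _ ≤ ζ + (1/2) * K₀ := by
          rw [abs_of_pos hζ, abs_mul]
          have : |(1/2 : ℝ)| = 1/2 := by norm_num
          rw [this]
          nlinarith [abs_nonneg (deriv (deriv W) (u t))]
  -- W' vanishes at the endpoints
  have hWcont : Continuous W := hWD.continuous
  have hv0top : Tendsto h atTop (nhds 0) := by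
    have h1 : Tendsto (fun t => Real.sqrt (W (u t))) atTop (nhds (Real.sqrt (W 1))) :=
      ((Real.continuous_sqrt.comp hWcont).tendsto 1).comp hlimtop
    rw [hW1, Real.sqrt_zero] at h1
    have h2 : (fun t => Real.sqrt (W (u t))) = h := funext fun t => (hsqrt t).symm
    rwa [h2] at h1
  have hW'1 : deriv W 1 = 0 := by
    have hv' : Tendsto (deriv h) atTop (nhds ((1/2) * deriv W 1)) := by
      rw [hderivh]
      have h1 : Tendsto (fun t => deriv W (u t)) atTop (nhds (deriv W 1)) :=
        ((hWD2.continuous).tendsto 1).comp hlimtop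
      exact h1.const_mul (1/2)
    have := deriv_limit_zero h huD2 hv0top _ hv'
    linarith
  have hW'm1 : deriv W (-1) = 0 := by
    set v : ℝ → ℝ := fun t => h (-t) with hvdef
    have hvD : Differentiable ℝ v := huD2.comp differentiable_neg
    have hulim : Tendsto (fun t => u (-t)) atTop (nhds (-1)) :=
      hlimbot.comp tendsto_neg_atTop_atBot
    have hv0 : Tendsto v atTop (nhds 0) := by
      have h1 : Tendsto (fun t => Real.sqrt (W (u (-t)))) atTop (nhds (Real.sqrt (W (-1)))) :=
        ((Real.continuous_sqrt.comp hWcont).tendsto (-1)).comp hulim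
      rw [hWm1, Real.sqrt_zero] at h1
      have h2 : (fun t => Real.sqrt (W (u (-t)))) = v := funext fun t => (hsqrt (-t)).symm
      rwa [h2] at h1
    have hvderiv : deriv v = fun t => -((1/2) * deriv W (u (-t))) := by
      funext t
      rw [hvdef]
      rw [deriv_comp_neg h t, hode (-t)]
    have hv' : Tendsto (deriv v) atTop (nhds (-((1/2) * deriv W (-1)))) := by
      rw [hvderiv]
      have h1 : Tendsto (fun t => deriv W (u (-t))) atTop (nhds (deriv W (-1))) :=
        ((hWD2.continuous).tendsto (-1)).comp hulim
      exact (h1.const_mul (1/2)).neg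
    have := deriv_limit_zero v hvD hv0 _ hv'
    linarith
  -- G and its derivative
  set G : ℝ → ℝ := fun t => w t * deriv w t - (deriv h t / h t) * (w t) ^ 2 with hGdef
  have hGd : ∀ t, HasDerivAt G
      (ζ * w t ^ 2 + (deriv w t - deriv h t / h t * w t) ^ 2) t := by
    intro t
    have A1 : HasDerivAt (fun s => w s * deriv w s)
        (deriv w t * deriv w t + w t * deriv (deriv w) t) t :=
      ((hwD t).hasDerivAt).mul ((hwD2 t).hasDerivAt)
    have A2 : HasDerivAt (fun s => deriv h s / h s)
        (((1 / 2) * (deriv (deriv W) (u t) * h t) * h t - deriv h t * deriv h t) / h t ^ 2) t :=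
      (hdh2 t).div (hdh t) (hne t)
    have A3 : HasDerivAt (fun s => (w s) ^ 2) (2 * w t * deriv w t) t := by
      have := ((hwD t).hasDerivAt).pow 2
      refine this.congr_deriv ?_
      ring
    have hcomb := A1.sub (A2.mul A3)
    refine hcomb.congr_deriv ?_
    rw [heqV t]
    have hVt : V t = ζ + (1 / 2) * deriv (deriv W) (u t) := rfl
    rw [hVt]
    field_simp [hne t]
    ring
  have hGmono : Monotone G := by
    apply monotone_of_deriv_nonneg (fun t => (hGd t).differentiableAt)
    intro t
    rw [(hGd t).deriv]
    positivity
  -- limits of G at both ends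
  have hGtop : Tendsto G atTop (nhds 0) := by
    set γp := Real.sqrt (ζ + deriv (deriv W) 1 / 2) with hγp
    have hγparg : 0 < ζ + deriv (deriv W) 1 / 2 := by linarith
    have hγppos : 0 < γp := Real.sqrt_pos.mpr hγparg
    have hγpsq : γp ^ 2 = ζ + deriv (deriv W) 1 / 2 := Real.sq_sqrt hγparg.le
    set gp := (max δp 0 + γp) / 2 with hgp
    have hmaxlt : max δp 0 < γp := max_lt hδp hγppos
    have hmax0 : (0:ℝ) ≤ max δp 0 := le_max_right _ _
    have hgppos : 0 < gp := by rw [hgp]; linarith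
    have hgplt : gp < γp := by rw [hgp]; linarith
    have hdlt : max δp 0 < gp := by rw [hgp]; linarith
    have hVtend : Tendsto V atTop (nhds (ζ + (1/2) * deriv (deriv W) 1)) := by
      have h1 : Tendsto (fun t => deriv (deriv W) (u t)) atTop
          (nhds (deriv (deriv W) 1)) := (hW''cont.tendsto 1).comp hlimtop
      exact (h1.const_mul (1/2)).const_add ζ
    have hVev : ∀ᶠ t in atTop, gp ^ 2 ≤ V t := by
      apply hVtend.eventually (eventually_ge_nhds ?_)
      have h1 : gp ^ 2 < γp ^ 2 := by nlinarith
      rw [hγpsq] at h1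
      linarith
    obtain ⟨T₀, hT₀⟩ := eventually_atTop.mp hVev
    obtain ⟨η, hη, hnb⟩ := near_one_bound W hWD hWD2 hW1 hW'1 rfl hW''1
    have huev : ∀ᶠ t in atTop, 1 - η ≤ u t :=
      hlimtop.eventually (eventually_ge_nhds (by linarith))
    obtain ⟨T', hT'⟩ := eventually_atTop.mp huev
    have hBbd : ∀ t, T' ≤ t → |deriv h t / h t| ≤ 2 * Real.sqrt (deriv (deriv W) 1) := by
      intro t ht
      have h1 := hnb (u t) (hT' t ht) (hult t)
      have h2 : deriv h t = (1/2) * deriv W (u t) := hode t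
      rw [← hsqrt t] at h1
      rw [abs_div, h2, abs_mul, abs_of_pos (hpos t), div_le_iff₀ (hpos t)]
      have h3 : |(1/2:ℝ)| = 1/2 := by norm_num
      rw [h3]
      nlinarith [hpos t, Real.sqrt_nonneg (deriv (deriv W) 1)]
    have hbd := weight_bound C δp δm w hbound
    have hres := G_tendsto_atTop w V h hwD hwD2 heqV (ζ + (1/2) * K₀) hKV gp (max T₀ 0)
      hgppos (fun t ht => hT₀ t (le_trans (le_max_left _ _) ht))
      (|C| * (max 1 ((2:ℝ) ^ δp)) * (max 1 ((2:ℝ) ^ δm))) (max δp 0) hdlt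
      (fun t ht => hbd t (le_trans (le_max_right _ _) ht))
      (2 * Real.sqrt (deriv (deriv W) 1)) T' hBbd
    exact hres
  have hGbot : Tendsto G atBot (nhds 0) := by
    set wn : ℝ → ℝ := fun t => w (-t) with hwndef
    set Vn : ℝ → ℝ := fun t => V (-t) with hVndef
    set hn : ℝ → ℝ := fun t => h (-t) with hhndef
    have hwnD : Differentiable ℝ wn := hwD.comp differentiable_neg
    have hderivwn : deriv wn = fun t => -deriv w (-t) := funext fun t => deriv_comp_neg w t
    have hwnD2 : Differentiable ℝ (deriv wn) := by
      rw [hderivwn]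
      exact (hwD2.comp differentiable_neg).neg
    have heqVn : ∀ t, deriv (deriv wn) t = Vn t * wn t := by
      intro t
      rw [hderivwn]
      have e1 : deriv (fun s => -deriv w (-s)) t = -deriv (fun s => deriv w (-s)) t :=
        deriv.neg
      rw [e1, deriv_comp_neg (deriv w) t, heqV (-t)]
      ring
    have hKVn : ∀ t, |Vn t| ≤ ζ + (1/2) * K₀ := fun t => hKV (-t)
    -- coercivity at -∞
    set γm := Real.sqrt (ζ + deriv (deriv W) (-1) / 2) with hγm
    have hγmarg : 0 < ζ + deriv (deriv W) (-1) / 2 := by linarith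
    have hγmpos : 0 < γm := Real.sqrt_pos.mpr hγmarg
    have hγmsq : γm ^ 2 = ζ + deriv (deriv W) (-1) / 2 := Real.sq_sqrt hγmarg.le
    set gm := (max δm 0 + γm) / 2 with hgm
    have hmaxlt : max δm 0 < γm := max_lt hδm hγmpos
    have hmax0 : (0:ℝ) ≤ max δm 0 := le_max_right _ _
    have hgmpos : 0 < gm := by rw [hgm]; linarith
    have hgmlt : gm < γm := by rw [hgm]; linarith
    have hdlt : max δm 0 < gm := by rw [hgm]; linarith
    have hVtendb : Tendsto V atBot (nhds (ζ + (1/2) * deriv (deriv W) (-1))) := by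
      have h1 : Tendsto (fun t => deriv (deriv W) (u t)) atBot
          (nhds (deriv (deriv W) (-1))) := (hW''cont.tendsto (-1)).comp hlimbot
      exact (h1.const_mul (1/2)).const_add ζ
    have hVevb : ∀ᶠ t in atBot, gm ^ 2 ≤ V t := by
      apply hVtendb.eventually (eventually_ge_nhds ?_)
      have h1 : gm ^ 2 < γm ^ 2 := by nlinarith
      rw [hγmsq] at h1
      linarith
    have hVevn : ∀ᶠ t in atTop, gm ^ 2 ≤ Vn t :=
      tendsto_neg_atTop_atBot.eventually hVevb
    obtain ⟨T₀, hT₀⟩ := eventually_atTop.mp hVevn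
    -- h'/h bound near -∞ via reflected W
    set Wn : ℝ → ℝ := fun x => W (-x) with hWndef
    have hWnD : Differentiable ℝ Wn := hWD.comp differentiable_neg
    have hderivWn : deriv Wn = fun x => -deriv W (-x) := funext fun x => deriv_comp_neg W x
    have hWnD2 : Differentiable ℝ (deriv Wn) := by
      rw [hderivWn]
      exact (hWD2.comp differentiable_neg).neg
    have hWn1 : Wn 1 = 0 := hWm1
    have hWn'1 : deriv Wn 1 = 0 := by
      rw [hderivWn]
      simp [hW'm1]
    have hWn''1 : deriv (deriv Wn) 1 = deriv (deriv W) (-1) := by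
      rw [hderivWn]
      have e1 : deriv (fun x => -deriv W (-x)) 1 = -deriv (fun x => deriv W (-x)) 1 :=
        deriv.neg
      rw [e1, deriv_comp_neg (deriv W) 1]
      simp
    obtain ⟨η, hη, hnb⟩ := near_one_bound Wn hWnD hWnD2 hWn1 hWn'1 hWn''1 hW''m1
    have huev : ∀ᶠ t in atBot, u t ≤ -1 + η :=
      hlimbot.eventually (eventually_le_nhds (by linarith))
    have huevn : ∀ᶠ t in atTop, u (-t) ≤ -1 + η :=
      tendsto_neg_atTop_atBot.eventually huev
    obtain ⟨T', hT'⟩ := eventually_atTop.mp huevn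
    have hBbd : ∀ t, T' ≤ t →
        |deriv hn t / hn t| ≤ 2 * Real.sqrt (deriv (deriv W) (-1)) := by
      intro t ht
      have hx1 : 1 - η ≤ -u (-t) := by linarith [hT' t ht]
      have hx2 : -u (-t) < 1 := by linarith [hugt (-t)]
      have h1 := hnb (-u (-t)) hx1 hx2
      have e1 : deriv Wn (-u (-t)) = -deriv W (u (-t)) := by
        rw [hderivWn]; simp
      have e2 : Wn (-u (-t)) = W (u (-t)) := by
        rw [hWndef]; simp
      rw [e1, e2, abs_neg, ← hsqrt (-t)] at h1
      have e3 : deriv hn t = -deriv h (-t) := deriv_comp_neg h t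
      have e4 : deriv h (-t) = (1/2) * deriv W (u (-t)) := hode (-t)
      rw [e3, abs_div, abs_neg, e4, abs_mul, abs_of_pos (hpos (-t)),
        div_le_iff₀ (hpos (-t))]
      have h3 : |(1/2:ℝ)| = 1/2 := by norm_num
      rw [h3]
      nlinarith [hpos (-t), Real.sqrt_nonneg (deriv (deriv W) (-1))]
    -- growth bound for wn
    have hboundn : ∀ t, |wn t| ≤ C * (1 + Real.exp t) ^ δm * (1 + Real.exp (-t)) ^ δp := by
      intro t
      have h1 := hbound (-t)
      rw [neg_neg] at h1
      calc |wn t| = |w (-t)| := rfl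
        _ ≤ C * (1 + Real.exp (-t)) ^ δp * (1 + Real.exp t) ^ δm := h1
        _ = C * (1 + Real.exp t) ^ δm * (1 + Real.exp (-t)) ^ δp := by ring
    have hbdn := weight_bound C δm δp wn hboundn
    have hnpos : ∀ t, 0 < hn t := fun t => hpos (-t)
    have hres := G_tendsto_atTop wn Vn hn hwnD hwnD2 heqVn (ζ + (1/2) * K₀) hKVn gm
      (max T₀ 0) hgmpos (fun t ht => hT₀ t (le_trans (le_max_left _ _) ht))
      (|C| * (max 1 ((2:ℝ) ^ δm)) * (max 1 ((2:ℝ) ^ δp))) (max δm 0) hdlt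
      (fun t ht => hbdn t (le_trans (le_max_right _ _) ht))
      (2 * Real.sqrt (deriv (deriv W) (-1))) T' hBbd
    -- identify with -(G ∘ neg)
    have hid : ∀ t, wn t * deriv wn t - (deriv hn t / hn t) * wn t ^ 2 = -(G (-t)) := by
      intro t
      have e1 : deriv wn t = -deriv w (-t) := deriv_comp_neg w t
      have e3 : deriv hn t = -deriv h (-t) := deriv_comp_neg h t
      rw [e1, e3]
      show w (-t) * -deriv w (-t) - -deriv h (-t) / h (-t) * w (-t) ^ 2
        = -(w (-t) * deriv w (-t) - deriv h (-t) / h (-t) * w (-t) ^ 2)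
      ring
    rw [funext hid] at hres
    have h2 : Tendsto (fun t => G (-t)) atTop (nhds 0) := by
      have := hres.neg
      simpa using this
    have h3 := h2.comp tendsto_neg_atBot_atTop
    have h4 : ((fun t => G (-t)) ∘ fun x : ℝ => -x) = G := by
      funext s
      simp [Function.comp]
    rwa [h4] at h3
  -- conclude
  have hG0 : ∀ t, G t = 0 := by
    intro t
    have h1 : G t ≤ 0 :=
      ge_of_tendsto hGtop ((eventually_ge_atTop t).mono fun s hs => hGmono hs)
    have h2 : 0 ≤ G t :=
      le_of_tendsto hGbot ((eventually_le_atBot t).mono fun s hs => hGmono hs)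
    linarith
  intro t
  have hd0 : deriv G t = 0 := by
    have : G = fun _ => (0:ℝ) := funext hG0
    rw [this]
    simp
  rw [(hGd t).deriv] at hd0
  have hsq : w t ^ 2 ≤ 0 := by nlinarith [sq_nonneg (deriv w t - deriv h t / h t * w t)]
  have hsq2 : w t ^ 2 = 0 := le_antisymm hsq (sq_nonneg _)
  exact pow_eq_zero_iff two_ne_zero |>.mp hsq2
end

section
/- Let W be smooth with W(±1)=0, W>0 on (−1,1), W''(±1)>0, and let u⋆ be the heteroclinic solution with (u⋆')² = W(u⋆). For ζ ≥ 0 define L_ζ w = −w'' + ζ w + (1/2)W''(u⋆)w. If ζ > 0 and w is a bounded solution of L_ζ w = 0 on a half line (t₀, ∞) with w(t₀)=0 and |w(t)| ≤ C e^{δ₊ t} for some δ₊ < √(ζ + W''(1)/2), then w ≡ 0 on (t₀,∞). -/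
open Set Filter Topology
open scoped ContDiff

lemma deriv_nonneg_right {f : ℝ → ℝ} {a c : ℝ} (hf : DifferentiableAt ℝ f a)
    (hfa : f a = 0) (hac : a < c) (hpos : ∀ t ∈ Set.Ioo a c, 0 ≤ f t) : 0 ≤ deriv f a := by
  have h : HasDerivWithinAt f (deriv f a) (Set.Ioi a) a :=
    hf.hasDerivAt.hasDerivWithinAt
  rw [hasDerivWithinAt_iff_tendsto_slope] at h
  have hIoi : Set.Ioi a \ {a} = Set.Ioi a := Set.diff_singleton_eq_self (by simp)
  rw [hIoi] at h
  refine ge_of_tendsto h ?_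
  filter_upwards [Ioo_mem_nhdsGT hac] with t ht
  rw [slope_def_field, hfa, sub_zero]
  exact div_nonneg (hpos t ht) (by linarith [ht.1])


lemma hasDerivAt_exp_mul (c : ℝ) (f : ℝ → ℝ) (f' : ℝ) (t : ℝ) (hf : HasDerivAt f f' t) :
    HasDerivAt (fun s => Real.exp (c * s) * f s) (Real.exp (c * t) * (f' + c * f t)) t := by
  have h0 : HasDerivAt (fun s : ℝ => c * s) (c * 1) t := (hasDerivAt_id t).const_mul c
  rw [mul_one] at h0
  have := h0.exp.mul hf
  refine this.congr_deriv ?_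
  ring

lemma monotone_deriv_nonneg {f : ℝ → ℝ} (hf : Differentiable ℝ f) (hm : Monotone f) (a : ℝ) :
    0 ≤ deriv f a := by
  have h : Tendsto (slope f a) (𝓝[≠] a) (𝓝 (deriv f a)) :=
    hasDerivAt_iff_tendsto_slope.mp (hf a).hasDerivAt
  refine ge_of_tendsto h ?_
  refine eventually_nhdsWithin_of_forall (fun t ht => ?_)
  rw [slope_def_field]
  rcases lt_or_gt_of_ne (Ne.symm ht) with h1 | h1
  · exact div_nonneg (by linarith [hm h1.le]) (by linarith)
  · have := hm h1.le
    exact div_nonneg_of_nonpos (by linarith) (by linarith)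

lemma arith9 (y q s : ℝ) (h : y < 0) : y * ((s + q / -y + 1) - s) = -q + y := by
  have hne : y ≠ 0 := ne_of_lt h
  have h1 : y * (q / y) = q := by
    rw [mul_div_assoc', mul_div_cancel_left₀ _ hne]
  rw [div_neg]
  nlinarith [h1]

set_option maxHeartbeats 1000000 in
lemma aux_le
    (ζ : ℝ) (hζ : 0 < ζ) (γ2 : ℝ) (hγ2 : 0 < γ2)
    (p : ℝ → ℝ) (hpc : Continuous p) (hplim : Tendsto p atTop (nhds γ2))
    (ws : ℝ → ℝ) (hwsd : Differentiable ℝ ws) (hwsd' : Differentiable ℝ (deriv ws))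
    (hwsc' : Continuous (deriv ws))
    (hwspos : ∀ t, 0 < ws t)
    (hws'' : ∀ t, deriv (deriv ws) t = p t * ws t)
    (t₀ : ℝ) (w : ℝ → ℝ)
    (hwd : Differentiable ℝ w) (hwd' : Differentiable ℝ (deriv w))
    (hwc' : Continuous (deriv w))
    (M : ℝ) (hM : ∀ t ∈ Set.Ici t₀, |w t| ≤ M)
    (hw'' : ∀ t ∈ Set.Ioi t₀, deriv (deriv w) t = (ζ + p t) * w t)
    (hb : w t₀ = 0) :
    ∀ t ∈ Set.Ioi t₀, w t ≤ 0 := by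
  by_contra hcon
  push_neg at hcon
  obtain ⟨t₁, ht₁, hwt₁⟩ := hcon
  have ht₀t₁ : t₀ < t₁ := ht₁
  -- the Wronskian-type function g = ws * w' - ws' * w
  set g : ℝ → ℝ := fun t => ws t * deriv w t - deriv ws t * w t with hg_def
  have hgc : Continuous g := (hwsd.continuous.mul hwc').sub (hwsc'.mul hwd.continuous)
  have hgderiv : ∀ t ∈ Set.Ioi t₀, HasDerivAt g (ζ * ws t * w t) t := by
    intro t ht
    have h1 : HasDerivAt (fun s => ws s * deriv w s)
        (deriv ws t * deriv w t + ws t * deriv (deriv w) t) t :=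
      (hwsd t).hasDerivAt.mul (hwd' t).hasDerivAt
    have h2 : HasDerivAt (fun s => deriv ws s * w s)
        (deriv (deriv ws) t * w t + deriv ws t * deriv w t) t :=
      (hwsd' t).hasDerivAt.mul (hwd t).hasDerivAt
    have h3 := h1.sub h2
    rw [hw'' t ht, hws'' t] at h3
    refine h3.congr_deriv ?_
    ring
  -- last zero of w before t₁
  set Z : Set ℝ := Set.Icc t₀ t₁ ∩ {t | w t = 0} with hZ_def
  have hZne : Z.Nonempty := ⟨t₀, ⟨le_rfl, le_of_lt ht₀t₁⟩, hb⟩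
  have hZbdd : BddAbove Z := ⟨t₁, fun t ht => ht.1.2⟩
  have hZclosed : IsClosed Z :=
    isClosed_Icc.inter (isClosed_eq hwd.continuous continuous_const)
  set a := sSup Z with ha_def
  have haZ : a ∈ Z := hZclosed.csSup_mem hZne hZbdd
  have ha0 : t₀ ≤ a := haZ.1.1
  have hwa : w a = 0 := haZ.2
  have hat₁ : a < t₁ :=
    lt_of_le_of_ne haZ.1.2 (fun h => by rw [h] at hwa; linarith)
  have hwpos1 : ∀ t ∈ Set.Ioc a t₁, 0 < w t := by
    rintro t ⟨hta, htt₁⟩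
    rcases lt_trichotomy (w t) 0 with hlt | heq0 | hgt
    · obtain ⟨s, hs, hws⟩ := intermediate_value_Icc htt₁ hwd.continuous.continuousOn
        ⟨le_of_lt hlt, le_of_lt hwt₁⟩
      have hsZ : s ∈ Z := ⟨⟨le_trans ha0 (le_trans hta.le hs.1), hs.2⟩, hws⟩
      have := le_csSup hZbdd hsZ
      have : t ≤ a := le_trans hs.1 this
      linarith
    · have htZ : t ∈ Z := ⟨⟨le_trans ha0 hta.le, htt₁⟩, heq0⟩
      have := le_csSup hZbdd htZ
      linarith
    · exact hgt
  -- g t₁ > 0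
  have hwderiva : 0 ≤ deriv w a :=
    deriv_nonneg_right (hwd a) hwa hat₁
      (fun t ht => (hwpos1 t ⟨ht.1, ht.2.le⟩).le)
  have hga : 0 ≤ g a := by
    rw [hg_def]
    simp only [hwa, mul_zero, sub_zero]
    exact mul_nonneg (hwspos a).le hwderiva
  have hgmono1 : StrictMonoOn g (Set.Icc a t₁) := by
    refine strictMonoOn_of_deriv_pos (convex_Icc a t₁) hgc.continuousOn ?_
    intro t ht
    rw [interior_Icc] at ht
    have htI : t ∈ Set.Ioi t₀ := lt_of_le_of_lt ha0 ht.1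
    rw [(hgderiv t htI).deriv]
    have h1 := hwpos1 t ⟨ht.1, ht.2.le⟩
    have h2 := hwspos t
    positivity
  have hgt₁ : 0 < g t₁ :=
    lt_of_le_of_lt hga (hgmono1 ⟨le_rfl, hat₁.le⟩ ⟨hat₁.le, le_rfl⟩ hat₁)
  -- the quotient v = w / ws
  set v : ℝ → ℝ := fun t => w t / ws t with hv_def
  have hvderiv : ∀ t, HasDerivAt v (g t / ws t ^ 2) t := by
    intro t
    have h1 := (hwd t).hasDerivAt.div (hwsd t).hasDerivAt (ne_of_gt (hwspos t))
    refine h1.congr_deriv ?_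
    rw [hg_def]
    ring_nf
  -- w stays positive on [t₁, ∞)
  have hwpos2 : ∀ t ∈ Set.Ici t₁, 0 < w t := by
    by_contra hcon2
    push_neg at hcon2
    obtain ⟨b', hb'1, hb'2⟩ := hcon2
    set Z2 : Set ℝ := Set.Icc t₁ b' ∩ {t | w t = 0} with hZ2_def
    have hZ2ne : Z2.Nonempty := by
      obtain ⟨s, hs, hws⟩ := intermediate_value_Icc' hb'1 hwd.continuous.continuousOn
        ⟨hb'2, hwt₁.le⟩
      exact ⟨s, hs, hws⟩
    have hZ2bdd : BddBelow Z2 := ⟨t₁, fun t ht => ht.1.1⟩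
    have hZ2closed : IsClosed Z2 :=
      isClosed_Icc.inter (isClosed_eq hwd.continuous continuous_const)
    set b := sInf Z2 with hb_def
    have hbZ : b ∈ Z2 := hZ2closed.csInf_mem hZ2ne hZ2bdd
    have hwb : w b = 0 := hbZ.2
    have ht₁b : t₁ < b :=
      lt_of_le_of_ne hbZ.1.1 (fun h => by rw [← h] at hwb; linarith)
    have hwpos3 : ∀ t ∈ Set.Ico t₁ b, 0 < w t := by
      rintro t ⟨htt₁, htb⟩
      rcases lt_trichotomy (w t) 0 with hlt | heq0 | hgt
      · obtain ⟨s, hs, hws⟩ := intermediate_value_Icc' htt₁ hwd.continuous.continuousOn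
          ⟨le_of_lt hlt, le_of_lt hwt₁⟩
        have hsZ : s ∈ Z2 := ⟨⟨hs.1, le_trans hs.2 (le_trans htb.le hbZ.1.2)⟩, hws⟩
        have := csInf_le hZ2bdd hsZ
        have : b ≤ t := le_trans this hs.2
        linarith
      · have htZ : t ∈ Z2 := ⟨⟨htt₁, le_trans htb.le hbZ.1.2⟩, heq0⟩
        have := csInf_le hZ2bdd htZ
        linarith
      · exact hgt
    have hwnn : ∀ t ∈ Set.Icc t₁ b, 0 ≤ w t := by
      rintro t ⟨h1, h2⟩
      rcases eq_or_lt_of_le h2 with h | h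
      · rw [h, hwb]
      · exact (hwpos3 t ⟨h1, h⟩).le
    have hgmono2 : MonotoneOn g (Set.Icc t₁ b) := by
      refine monotoneOn_of_deriv_nonneg (convex_Icc t₁ b) hgc.continuousOn ?_ ?_
      · intro t ht
        rw [interior_Icc] at ht
        exact (hgderiv t (lt_trans ht₀t₁ ht.1)).differentiableAt.differentiableWithinAt
      · intro t ht
        rw [interior_Icc] at ht
        rw [(hgderiv t (lt_trans ht₀t₁ ht.1)).deriv]
        have h1 := hwnn t ⟨ht.1.le, ht.2.le⟩
        have h2 := hwspos t
        positivity
    have hvmono : StrictMonoOn v (Set.Icc t₁ b) := by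
      refine strictMonoOn_of_deriv_pos (convex_Icc t₁ b)
        (hwd.continuous.div hwsd.continuous (fun t => ne_of_gt (hwspos t))).continuousOn ?_
      intro t ht
      rw [interior_Icc] at ht
      rw [(hvderiv t).deriv]
      have h1 : g t₁ ≤ g t := hgmono2 ⟨le_rfl, ht₁b.le⟩ ⟨ht.1.le, ht.2.le⟩ ht.1.le
      have h2 := hwspos t
      have h3 : 0 < g t := lt_of_lt_of_le hgt₁ h1
      positivity
    have h1 : v t₁ < v b := hvmono ⟨le_rfl, ht₁b.le⟩ ⟨ht₁b.le, le_rfl⟩ ht₁b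
    have h2 : v b = 0 := by rw [hv_def]; simp [hwb]
    have h3 : 0 < v t₁ := div_pos hwt₁ (hwspos t₁)
    linarith
  -- v is monotone on [t₁, ∞)
  have hgmono4 : MonotoneOn g (Set.Ici t₁) := by
    refine monotoneOn_of_deriv_nonneg (convex_Ici t₁) hgc.continuousOn ?_ ?_
    · intro t ht
      rw [interior_Ici] at ht
      exact (hgderiv t (lt_trans ht₀t₁ ht)).differentiableAt.differentiableWithinAt
    · intro t ht
      rw [interior_Ici] at ht
      rw [(hgderiv t (lt_trans ht₀t₁ ht)).deriv]
      have h1 := (hwpos2 t (Set.mem_Ici.mpr ht.le)).le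
      have h2 := hwspos t
      positivity
  have hvmono4 : MonotoneOn v (Set.Ici t₁) := by
    refine monotoneOn_of_deriv_nonneg (convex_Ici t₁)
      (hwd.continuous.div hwsd.continuous (fun t => ne_of_gt (hwspos t))).continuousOn ?_ ?_
    · intro t _
      exact (hvderiv t).differentiableAt.differentiableWithinAt
    · intro t ht
      rw [interior_Ici] at ht
      rw [(hvderiv t).deriv]
      have h1 : g t₁ ≤ g t := hgmono4 Set.self_mem_Ici (Set.mem_Ici.mpr ht.le) ht.le
      have h2 := hwspos t
      have h3 : 0 < g t := lt_of_lt_of_le hgt₁ h1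
      positivity
  have hv1pos : 0 < v t₁ := div_pos hwt₁ (hwspos t₁)
  -- choose rates k > Γ and a threshold T
  set k := Real.sqrt (γ2 + ζ/2) with hk_def
  set Γ := Real.sqrt (γ2 + ζ/4) with hΓ_def
  have hk2 : k ^ 2 = γ2 + ζ/2 := Real.sq_sqrt (by linarith)
  have hΓ2 : Γ ^ 2 = γ2 + ζ/4 := Real.sq_sqrt (by linarith)
  have hkpos : 0 < k := Real.sqrt_pos.mpr (by linarith)
  have hΓnn : 0 ≤ Γ := Real.sqrt_nonneg _
  have hΓk : Γ < k := Real.sqrt_lt_sqrt (by linarith) (by linarith)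
  have hev : ∀ᶠ t in atTop, p t ∈ Set.Ioo (γ2 - ζ/4) (γ2 + ζ/4) :=
    hplim (Ioo_mem_nhds (by linarith) (by linarith))
  obtain ⟨T', hT'⟩ := eventually_atTop.mp hev
  set T := max T' t₁ with hT_def
  have hTt₁ : t₁ ≤ T := le_max_right _ _
  have hTt₀ : t₀ < T := lt_of_lt_of_le ht₀t₁ hTt₁
  have hpk : ∀ t, T ≤ t → k ^ 2 ≤ ζ + p t := by
    intro t ht
    have := (hT' t (le_trans (le_max_left _ _) ht)).1
    rw [hk2]; linarith
  have hpΓ : ∀ t, T ≤ t → p t ≤ Γ ^ 2 := by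
    intro t ht
    have := (hT' t (le_trans (le_max_left _ _) ht)).2
    rw [hΓ2]; linarith
  have hwposT : ∀ t, T ≤ t → 0 < w t := fun t ht => hwpos2 t (le_trans hTt₁ ht)
  have hwleM : ∀ t, t₀ ≤ t → w t ≤ M := fun t ht => (abs_le.mp (hM t ht)).2
  -- E = exp(-k t) (w' + k w) is monotone on [T, ∞)
  have hzD : ∀ t ∈ Set.Ioi t₀, HasDerivAt (fun s => deriv w s + k * w s)
      ((ζ + p t) * w t + k * deriv w t) t := by
    intro t ht
    have h1 := (hwd' t).hasDerivAt
    have h2 : HasDerivAt (fun s => k * w s) (k * deriv w t) t :=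
      ((hwd t).hasDerivAt).const_mul k
    have h3 := h1.add h2
    rwa [hw'' t ht] at h3
  set E : ℝ → ℝ := fun t => Real.exp (-k * t) * (deriv w t + k * w t) with hE_def
  have hEderiv : ∀ t ∈ Set.Ioi t₀, HasDerivAt E
      (Real.exp (-k * t) * ((ζ + p t - k ^ 2) * w t)) t := by
    intro t ht
    have := hasDerivAt_exp_mul (-k) _ _ t (hzD t ht)
    convert this using 1
    ring
  have hEmono : MonotoneOn E (Set.Ici T) := by
    refine monotoneOn_of_deriv_nonneg (convex_Ici T)
      (fun t ht => (hEderiv t (lt_of_lt_of_le hTt₀ ht)).differentiableAt.continuousAt.continuousWithinAt) ?_ ?_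
    · intro t ht
      rw [interior_Ici] at ht
      exact (hEderiv t (lt_trans hTt₀ ht)).differentiableAt.differentiableWithinAt
    · intro t ht
      rw [interior_Ici] at ht
      rw [(hEderiv t (lt_trans hTt₀ ht)).deriv]
      have h1 := hpk t ht.le
      have h2 := hwposT t ht.le
      have h3 := Real.exp_nonneg (-k * t)
      have h4 : 0 ≤ ζ + p t - k ^ 2 := by linarith
      positivity
  -- claim: w' + k w ≤ 0 on [T, ∞)
  have hzneg : ∀ s, T ≤ s → deriv w s + k * w s ≤ 0 := by
    by_contra hcon3
    push_neg at hcon3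
    obtain ⟨s, hsT, hzs⟩ := hcon3
    have hEs : 0 < E s := mul_pos (Real.exp_pos _) hzs
    have key : ∀ t, s ≤ t → E s * Real.exp (k * t) - k * M ≤ deriv w t := by
      intro t hts
      have h1 : E s ≤ E t := hEmono hsT (le_trans hsT hts) hts
      have hept : (0:ℝ) < Real.exp (k * t) := Real.exp_pos _
      have h3 : E s * Real.exp (k * t) ≤
          Real.exp (-k * t) * (deriv w t + k * w t) * Real.exp (k * t) :=
        mul_le_mul_of_nonneg_right h1 hept.le
      have h4 : Real.exp (-k * t) * Real.exp (k * t) = 1 := by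
        rw [← Real.exp_add, show -k * t + k * t = 0 by ring, Real.exp_zero]
      have h5 : E s * Real.exp (k * t) ≤ deriv w t + k * w t := by
        calc E s * Real.exp (k * t)
            ≤ Real.exp (-k * t) * (deriv w t + k * w t) * Real.exp (k * t) := h3
          _ = (deriv w t + k * w t) * (Real.exp (-k * t) * Real.exp (k * t)) := by ring
          _ = deriv w t + k * w t := by rw [h4, mul_one]
      have h6 : w t ≤ M := hwleM t (le_trans hTt₀.le (le_trans hsT hts))
      nlinarith [hkpos.le]
    have htend : Tendsto (fun t => E s * Real.exp (k * t) - k * M) atTop atTop := by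
      apply tendsto_atTop_add_const_right
      apply Tendsto.const_mul_atTop hEs
      exact Real.tendsto_exp_atTop.comp (Tendsto.const_mul_atTop hkpos tendsto_id)
    obtain ⟨s', hs'⟩ := eventually_atTop.mp (htend.eventually_ge_atTop 1)
    set s'' := max s' s with hs''_def
    have hs''s : s ≤ s'' := le_max_right _ _
    have hs''t₀ : t₀ ≤ s'' := le_trans hTt₀.le (le_trans hsT hs''s)
    have hw'ge : ∀ t, s'' ≤ t → 1 ≤ deriv w t := fun t ht =>
      le_trans (hs' t (le_trans (le_max_left _ _) ht)) (key t (le_trans hs''s ht))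
    have hmono' : MonotoneOn (fun t => w t - t) (Set.Ici s'') := by
      refine monotoneOn_of_deriv_nonneg (convex_Ici s'')
        ((hwd.continuous.sub continuous_id).continuousOn) ?_ ?_
      · intro t _
        exact ((hwd t).sub differentiableAt_fun_id).differentiableWithinAt
      · intro t ht
        rw [interior_Ici] at ht
        rw [deriv_fun_sub (hwd t) differentiableAt_fun_id]
        simp only [deriv_id'']
        linarith [hw'ge t ht.le]
    set t₂ := s'' + (M + 1 - w s'') with ht₂_def
    have hwsM : w s'' ≤ M := hwleM s'' hs''t₀
    have h1 : s'' ≤ t₂ := by rw [ht₂_def]; linarith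
    have h2 : w s'' - s'' ≤ w t₂ - t₂ := hmono' Set.self_mem_Ici h1 h1
    have h3 : w t₂ ≤ M := hwleM t₂ (le_trans hs''t₀ h1)
    rw [ht₂_def] at h2
    linarith
  -- decay of w: exp(k t) * w is antitone on [T, ∞)
  have hFD : ∀ t : ℝ, HasDerivAt (fun s => Real.exp (k * s) * w s)
      (Real.exp (k * t) * (deriv w t + k * w t)) t := fun t =>
    hasDerivAt_exp_mul k w (deriv w t) t (hwd t).hasDerivAt
  have hFanti : AntitoneOn (fun t => Real.exp (k * t) * w t) (Set.Ici T) := by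
    refine antitoneOn_of_deriv_nonpos (convex_Ici T)
      (fun t _ => (hFD t).differentiableAt.continuousAt.continuousWithinAt) ?_ ?_
    · intro t _
      exact (hFD t).differentiableAt.differentiableWithinAt
    · intro t ht
      rw [interior_Ici] at ht
      rw [(hFD t).deriv]
      exact mul_nonpos_of_nonneg_of_nonpos (Real.exp_nonneg _) (hzneg t ht.le)
  -- growth of ws: claim ws' + Γ ws ≥ 0 on [T, ∞)
  have hyD : ∀ t : ℝ, HasDerivAt (fun s => deriv ws s + Γ * ws s)
      (p t * ws t + Γ * deriv ws t) t := by
    intro t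
    have h1 := (hwsd' t).hasDerivAt
    have h2 : HasDerivAt (fun s => Γ * ws s) (Γ * deriv ws t) t :=
      ((hwsd t).hasDerivAt).const_mul Γ
    have h3 := h1.add h2
    rwa [hws'' t] at h3
  set G : ℝ → ℝ := fun t => Real.exp (-Γ * t) * (deriv ws t + Γ * ws t) with hG_def
  have hGderiv : ∀ t : ℝ, HasDerivAt G (Real.exp (-Γ * t) * ((p t - Γ ^ 2) * ws t)) t := by
    intro t
    have := hasDerivAt_exp_mul (-Γ) _ _ t (hyD t)
    convert this using 1
    ring
  have hGanti : AntitoneOn G (Set.Ici T) := by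
    refine antitoneOn_of_deriv_nonpos (convex_Ici T)
      (fun t _ => (hGderiv t).differentiableAt.continuousAt.continuousWithinAt) ?_ ?_
    · intro t _
      exact (hGderiv t).differentiableAt.differentiableWithinAt
    · intro t ht
      rw [interior_Ici] at ht
      rw [(hGderiv t).deriv]
      have h1 := hpΓ t ht.le
      have h2 := hwspos t
      apply mul_nonpos_of_nonneg_of_nonpos (Real.exp_nonneg _)
      nlinarith
  have hynn : ∀ s, T ≤ s → 0 ≤ deriv ws s + Γ * ws s := by
    by_contra hcon4
    push_neg at hcon4
    obtain ⟨s, hsT, hys⟩ := hcon4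
    have hGs : G s < 0 := mul_neg_of_pos_of_neg (Real.exp_pos _) hys
    have key2 : ∀ t, s ≤ t → deriv ws t ≤ deriv ws s + Γ * ws s := by
      intro t hts
      have h1 : G t ≤ G s := hGanti hsT (le_trans hsT hts) hts
      have h2 : Real.exp (Γ * t) * G t ≤ Real.exp (Γ * t) * G s :=
        mul_le_mul_of_nonneg_left h1 (Real.exp_nonneg _)
      have h3 : Real.exp (Γ * t) * G t = deriv ws t + Γ * ws t := by
        rw [hG_def]
        calc Real.exp (Γ * t) * (Real.exp (-Γ * t) * (deriv ws t + Γ * ws t))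
            = (Real.exp (Γ * t) * Real.exp (-Γ * t)) * (deriv ws t + Γ * ws t) := by ring
          _ = deriv ws t + Γ * ws t := by
              rw [← Real.exp_add, show Γ * t + -Γ * t = 0 by ring, Real.exp_zero, one_mul]
      have h4 : Real.exp (Γ * s) ≤ Real.exp (Γ * t) :=
        Real.exp_le_exp.mpr (mul_le_mul_of_nonneg_left hts hΓnn)
      have h5 : Real.exp (Γ * t) * G s ≤ Real.exp (Γ * s) * G s :=
        mul_le_mul_of_nonpos_right h4 hGs.le
      have h6 : Real.exp (Γ * s) * G s = deriv ws s + Γ * ws s := by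
        rw [hG_def]
        calc Real.exp (Γ * s) * (Real.exp (-Γ * s) * (deriv ws s + Γ * ws s))
            = (Real.exp (Γ * s) * Real.exp (-Γ * s)) * (deriv ws s + Γ * ws s) := by ring
          _ = deriv ws s + Γ * ws s := by
              rw [← Real.exp_add, show Γ * s + -Γ * s = 0 by ring, Real.exp_zero, one_mul]
      have h7 : 0 ≤ Γ * ws t := mul_nonneg hΓnn (hwspos t).le
      rw [h3] at h2
      rw [h6] at h5
      linarith
    -- then ws becomes negative, contradiction
    have hmono'' : AntitoneOn (fun t => ws t - (deriv ws s + Γ * ws s) * t) (Set.Ici s) := by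
      refine antitoneOn_of_deriv_nonpos (convex_Ici s)
        ((hwsd.continuous.sub (continuous_const.mul continuous_id)).continuousOn) ?_ ?_
      · intro t _
        exact ((hwsd t).sub ((differentiableAt_fun_id).const_mul _)).differentiableWithinAt
      · intro t ht
        rw [interior_Ici] at ht
        rw [deriv_fun_sub (hwsd t) ((differentiableAt_fun_id).const_mul _),
          deriv_const_mul _ differentiableAt_fun_id]
        simp only [deriv_id'', mul_one]
        have := key2 t ht.le
        linarith
    set ys := deriv ws s + Γ * ws s with hys_def
    set t₃ := s + ws s / (-ys) + 1 with ht₃_def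
    have hyspos : 0 < -ys := by rw [hys_def]; linarith
    have hst₃ : s ≤ t₃ := by
      rw [ht₃_def]
      have : 0 ≤ ws s / (-ys) := div_nonneg (hwspos s).le hyspos.le
      linarith
    have h8 : ws t₃ - ys * t₃ ≤ ws s - ys * s := hmono'' Set.self_mem_Ici hst₃ hst₃
    have h9 : ys * (t₃ - s) = -(ws s) + ys := by
      rw [ht₃_def]
      exact arith9 ys (ws s) s (by linarith)
    have h10 : ws t₃ ≤ ws s + ys * (t₃ - s) := by linarith [h8]
    have h11 : ws t₃ ≤ ys := by rw [h9] at h10; linarith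
    have := hwspos t₃
    linarith
  -- growth of ws: exp(Γ t) * ws is monotone on [T, ∞)
  have hHD : ∀ t : ℝ, HasDerivAt (fun s => Real.exp (Γ * s) * ws s)
      (Real.exp (Γ * t) * (deriv ws t + Γ * ws t)) t := fun t =>
    hasDerivAt_exp_mul Γ ws (deriv ws t) t (hwsd t).hasDerivAt
  have hHmono : MonotoneOn (fun t => Real.exp (Γ * t) * ws t) (Set.Ici T) := by
    refine monotoneOn_of_deriv_nonneg (convex_Ici T)
      (fun t _ => (hHD t).differentiableAt.continuousAt.continuousWithinAt) ?_ ?_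
    · intro t _
      exact (hHD t).differentiableAt.differentiableWithinAt
    · intro t ht
      rw [interior_Ici] at ht
      rw [(hHD t).deriv]
      exact mul_nonneg (Real.exp_nonneg _) (hynn t ht.le)
  -- final contradiction
  have hfin : ∀ t, T ≤ t →
      v t₁ * Real.exp ((k - Γ) * t) * (Real.exp (Γ * T) * ws T) ≤ Real.exp (k * T) * w T := by
    intro t ht
    have h1 : Real.exp (k * t) * w t ≤ Real.exp (k * T) * w T :=
      hFanti Set.self_mem_Ici ht ht
    have h2 : Real.exp (Γ * T) * ws T ≤ Real.exp (Γ * t) * ws t :=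
      hHmono Set.self_mem_Ici ht ht
    have h3 : v t₁ ≤ v t := hvmono4 Set.self_mem_Ici (le_trans hTt₁ ht) (le_trans hTt₁ ht)
    have h4 : v t₁ * ws t ≤ w t := by
      have h := mul_le_mul_of_nonneg_right h3 (hwspos t).le
      have hvt : v t * ws t = w t := by
        simp only [hv_def]
        exact div_mul_cancel₀ _ (ne_of_gt (hwspos t))
      linarith
    have hc1 : 0 ≤ v t₁ * Real.exp ((k - Γ) * t) :=
      mul_nonneg hv1pos.le (Real.exp_nonneg _)
    have h6 := mul_le_mul_of_nonneg_left h2 hc1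
    have h5 : Real.exp (Γ * t) * Real.exp ((k - Γ) * t) = Real.exp (k * t) := by
      rw [← Real.exp_add, show Γ * t + (k - Γ) * t = k * t by ring]
    have h7 : v t₁ * Real.exp ((k - Γ) * t) * (Real.exp (Γ * t) * ws t)
        = (v t₁ * ws t) * Real.exp (k * t) := by
      rw [← h5]; ring
    have h8 : (v t₁ * ws t) * Real.exp (k * t) ≤ w t * Real.exp (k * t) :=
      mul_le_mul_of_nonneg_right h4 (Real.exp_nonneg _)
    calc v t₁ * Real.exp ((k - Γ) * t) * (Real.exp (Γ * T) * ws T)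
        ≤ v t₁ * Real.exp ((k - Γ) * t) * (Real.exp (Γ * t) * ws t) := h6
      _ = (v t₁ * ws t) * Real.exp (k * t) := h7
      _ ≤ w t * Real.exp (k * t) := h8
      _ = Real.exp (k * t) * w t := by ring
      _ ≤ Real.exp (k * T) * w T := h1
  have htend2 : Tendsto (fun t => v t₁ * Real.exp ((k - Γ) * t) * (Real.exp (Γ * T) * ws T))
      atTop atTop := by
    apply Tendsto.atTop_mul_const (mul_pos (Real.exp_pos _) (hwspos T))
    apply Tendsto.const_mul_atTop hv1pos
    exact Real.tendsto_exp_atTop.comp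
      (Tendsto.const_mul_atTop (by linarith : (0:ℝ) < k - Γ) tendsto_id)
  obtain ⟨t₄, ht₄⟩ := eventually_atTop.mp
    ((htend2.eventually_gt_atTop (Real.exp (k * T) * w T)).and (eventually_ge_atTop T))
  have hlt := (ht₄ t₄ le_rfl).1
  have hfin2 := hfin t₄ (ht₄ t₄ le_rfl).2
  linarith


/-- Injectivity on a half line: if `ζ > 0` and `w` is a bounded solution of
`L_ζ w = −w'' + ζ w + (1/2)W''(u⋆) w = 0` on `(t₀, ∞)` with `w(t₀) = 0` and
`|w(t)| ≤ C e^{δ₊ t}` for some `δ₊ < √(ζ + W''(1)/2)`, then `w ≡ 0` on `(t₀, ∞)`. -/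
theorem Lzeta_injective_on_half_line
    (W : ℝ → ℝ) (hW : ContDiff ℝ (⊤ : ℕ∞) W)
    (hW1 : W 1 = 0) (hWm1 : W (-1) = 0)
    (hWpos : ∀ x ∈ Set.Ioo (-1 : ℝ) 1, 0 < W x)
    (hW''1 : 0 < deriv (deriv W) 1) (hW''m1 : 0 < deriv (deriv W) (-1))
    (u : ℝ → ℝ) (hu : ContDiff ℝ (⊤ : ℕ∞) u)
    (hode : ∀ t, deriv (deriv u) t = (1 / 2) * deriv W (u t))
    (hfirst : ∀ t, (deriv u t) ^ 2 = W (u t))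
    (hu0 : u 0 = 0) (hmono : StrictMono u)
    (hlimtop : Tendsto u atTop (nhds 1)) (hlimbot : Tendsto u atBot (nhds (-1)))
    (ζ : ℝ) (hζ : 0 < ζ) (t₀ : ℝ)
    (δp : ℝ) (hδp : δp < Real.sqrt (ζ + deriv (deriv W) 1 / 2))
    (w : ℝ → ℝ) (hw : ContDiff ℝ 2 w)
    (hbdd : ∃ M : ℝ, ∀ t ∈ Set.Ici t₀, |w t| ≤ M)
    (heq : ∀ t ∈ Set.Ioi t₀,
      -(deriv (deriv w) t) + ζ * w t + (1 / 2) * deriv (deriv W) (u t) * w t = 0)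
    (hb : w t₀ = 0)
    (C : ℝ)
    (hgrowth : ∀ t ∈ Set.Ioi t₀, |w t| ≤ C * Real.exp (δp * t)) :
    ∀ t ∈ Set.Ioi t₀, w t = 0 := by
  -- regularity of u and W
  have hu1 : ContDiff ℝ ∞ u := hu.of_le (by simp)
  have hud : Differentiable ℝ u := hu1.differentiable (by norm_num)
  have hus1 : ContDiff ℝ ∞ (deriv u) := (contDiff_infty_iff_deriv.mp hu1).2
  have hus2 : ContDiff ℝ ∞ (deriv (deriv u)) := (contDiff_infty_iff_deriv.mp hus1).2
  have hwsd : Differentiable ℝ (deriv u) := hus1.differentiable (by norm_num)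
  have hwsd' : Differentiable ℝ (deriv (deriv u)) := hus2.differentiable (by norm_num)
  have hwsc' : Continuous (deriv (deriv u)) := hus2.continuous
  have hW1' : ContDiff ℝ ∞ W := hW.of_le (by simp)
  have hWd1 : ContDiff ℝ ∞ (deriv W) := (contDiff_infty_iff_deriv.mp hW1').2
  have hWd2 : ContDiff ℝ ∞ (deriv (deriv W)) := (contDiff_infty_iff_deriv.mp hWd1).2
  have hW'd : Differentiable ℝ (deriv W) := hWd1.differentiable (by norm_num)
  have hW''c : Continuous (deriv (deriv W)) := hWd2.continuous
  -- regularity of w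
  have h2 : (2 : WithTop ℕ∞) = 1 + 1 := by norm_num
  have hw' : ContDiff ℝ (1 + 1) w := h2 ▸ hw
  have hwsucc := contDiff_succ_iff_deriv.mp hw'
  have hwd : Differentiable ℝ w := hwsucc.1
  have hwd' : Differentiable ℝ (deriv w) := hwsucc.2.2.differentiable one_ne_zero
  have hwc' : Continuous (deriv w) := hwsucc.2.2.continuous
  -- range of u
  have hur : ∀ t, u t ∈ Set.Ioo (-1 : ℝ) 1 := by
    intro t
    constructor
    · exact lt_of_le_of_lt (hmono.monotone.le_of_tendsto hlimbot (t - 1)) (hmono (sub_one_lt t))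
    · exact lt_of_lt_of_le (hmono (lt_add_one t)) (hmono.monotone.ge_of_tendsto hlimtop (t + 1))
  -- positivity of the derivative of u
  have hwspos : ∀ t, 0 < deriv u t := by
    intro t
    have hnn : 0 ≤ deriv u t := monotone_deriv_nonneg hud hmono.monotone t
    have hne : deriv u t ≠ 0 := by
      intro h0
      have h := hfirst t
      rw [h0] at h
      norm_num at h
      linarith [hWpos (u t) (hur t)]
    exact lt_of_le_of_ne hnn (Ne.symm hne)
  -- the potential p and its limit
  have hpc : Continuous (fun s => (1 / 2 : ℝ) * deriv (deriv W) (u s)) :=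
    continuous_const.mul (hW''c.comp hud.continuous)
  have hγ2 : 0 < deriv (deriv W) 1 / 2 := by linarith
  have hplim : Tendsto (fun s => (1 / 2 : ℝ) * deriv (deriv W) (u s)) atTop
      (nhds (deriv (deriv W) 1 / 2)) := by
    have h1 : Tendsto (fun s => deriv (deriv W) (u s)) atTop (nhds (deriv (deriv W) 1)) :=
      (hW''c.tendsto 1).comp hlimtop
    have h2 := h1.const_mul (1 / 2 : ℝ)
    rwa [show (1 / 2 : ℝ) * deriv (deriv W) 1 = deriv (deriv W) 1 / 2 by ring] at h2
  -- the linearized equation for the derivative of u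
  have hws'' : ∀ t, deriv (deriv (deriv u)) t
      = (1 / 2 : ℝ) * deriv (deriv W) (u t) * deriv u t := by
    intro t
    have hd1 : deriv (deriv u) = fun s => (1 / 2 : ℝ) * deriv W (u s) := funext fun s => hode s
    have hcomp : HasDerivAt (fun s => deriv W (u s)) (deriv (deriv W) (u t) * deriv u t) t := by
      have := HasDerivAt.comp t ((hW'd (u t)).hasDerivAt) ((hud t).hasDerivAt)
      exact this
    have hc2 : HasDerivAt (fun s => (1 / 2 : ℝ) * deriv W (u s))
        ((1 / 2 : ℝ) * (deriv (deriv W) (u t) * deriv u t)) t := hcomp.const_mul _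
    rw [hd1, hc2.deriv]
    ring
  obtain ⟨M, hM⟩ := hbdd
  -- the equation for w in the form needed
  have hw'' : ∀ t ∈ Set.Ioi t₀,
      deriv (deriv w) t = (ζ + (1 / 2 : ℝ) * deriv (deriv W) (u t)) * w t := by
    intro t ht
    have h := heq t ht
    ring_nf
    ring_nf at h
    linarith
  -- apply the key lemma to w
  have hle : ∀ t ∈ Set.Ioi t₀, w t ≤ 0 :=
    aux_le ζ hζ (deriv (deriv W) 1 / 2) hγ2
      (fun s => (1 / 2 : ℝ) * deriv (deriv W) (u s)) hpc hplim
      (deriv u) hwsd hwsd' hwsc' hwspos hws'' t₀ w hwd hwd' hwc' M hM hw'' hb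
  -- apply the key lemma to -w
  have hdw2 : deriv (fun t => -w t) = fun t => -deriv w t := funext fun t => deriv.neg
  have hw2d' : Differentiable ℝ (deriv (fun t => -w t)) := by rw [hdw2]; exact hwd'.neg
  have hw2c' : Continuous (deriv (fun t => -w t)) := by rw [hdw2]; exact hwc'.neg
  have hM2 : ∀ t ∈ Set.Ici t₀, |(fun t => -w t) t| ≤ M := by
    intro t ht
    simpa using hM t ht
  have hw2'' : ∀ t ∈ Set.Ioi t₀,
      deriv (deriv (fun t => -w t)) t
        = (ζ + (1 / 2 : ℝ) * deriv (deriv W) (u t)) * (fun t => -w t) t := by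
    intro t ht
    rw [hdw2, deriv.fun_neg, hw'' t ht]
    ring
  have hb2 : (fun t => -w t) t₀ = 0 := by simp [hb]
  have hge : ∀ t ∈ Set.Ioi t₀, -w t ≤ 0 :=
    aux_le ζ hζ (deriv (deriv W) 1 / 2) hγ2
      (fun s => (1 / 2 : ℝ) * deriv (deriv W) (u s)) hpc hplim
      (deriv u) hwsd hwsd' hwsc' hwspos hws'' t₀ (fun t => -w t) hwd.neg hw2d' hw2c'
      M hM2 hw2'' hb2
  intro t ht
  have h1 := hle t ht
  have h2 := hge t ht
  linarith
end
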